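/- arXiv:1508.05657 — 6 statements merged into one kernel-verified Lean document; each statement's English description precedes it below -/
import Mathlib

section
/- The join of a (p)-sphere graph and a (q)-sphere graph in the sense of Evako is a (p+q+1)-sphere graph. In particular, the join of the 0-sphere (two isolated vertices) with a d-sphere is a (d+1)-sphere (the suspension). -/
universe u

/-- Fuel-indexed contractibility (Evako / Ivashchenko): a one-point graph is
contractible, and `G` is contractible if there is a vertex `x` whose unit sphere
(induced graph on the neighbors of `x`) is contractible and whose deletion leaves a
contractible graph.  The empty graph is not contractible. -/
def ContractibleFuel : ℕ → ∀ {V : Type u}, SimpleGraph V → Prop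
  | 0, _, _ => False
  | n + 1, V, G =>
      (Nonempty V ∧ Subsingleton V) ∨
      ∃ x : V, ContractibleFuel n (G.induce (G.neighborSet x)) ∧
        ContractibleFuel n (G.induce {y : V | y ≠ x})

/-- A graph is contractible if it is so with some amount of fuel. -/
def Contractible {V : Type u} (G : SimpleGraph V) : Prop :=
  ∃ n, ContractibleFuel n G

/-- Fuel-indexed Evako spheres, with dimension shifted by one: index `0` is the
`(-1)`-sphere (the empty graph); a graph has sphere index `s+1` (i.e. is an
`s`-sphere) if it is nonempty, every unit sphere has sphere index `s`, and removing
any single vertex yields a contractible graph. -/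
def SphereFuel : ℕ → ℕ → ∀ {V : Type u}, SimpleGraph V → Prop
  | 0, _, _, _ => False
  | _ + 1, 0, V, _ => IsEmpty V
  | n + 1, s + 1, V, G =>
      Nonempty V ∧
      (∀ x : V, SphereFuel n s (G.induce (G.neighborSet x))) ∧
      (∀ x : V, Contractible (G.induce {y : V | y ≠ x}))

/-- `G` is a `d`-sphere in the sense of Evako (for `d ≥ -1`). -/
def IsSphere (d : ℤ) {V : Type u} (G : SimpleGraph V) : Prop :=
  -1 ≤ d ∧ ∃ n, SphereFuel n (d + 1).toNat G

/-- The join of two graphs: the disjoint union together with all edges between the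
two vertex sets. -/
def graphJoin {V W : Type u} (G : SimpleGraph V) (H : SimpleGraph W) :
    SimpleGraph (V ⊕ W) where
  Adj a b :=
    match a, b with
    | Sum.inl v, Sum.inl v' => G.Adj v v'
    | Sum.inr w, Sum.inr w' => H.Adj w w'
    | Sum.inl _, Sum.inr _ => True
    | Sum.inr _, Sum.inl _ => True
  symm := by
    constructor; rintro (v | w) (v' | w') h <;> simp_all [SimpleGraph.adj_comm]
  loopless := by
    constructor; rintro (v | w) h <;> simp_all

/-!
The proof is by induction on the dimensions. In `G * H` the unit sphere of a vertex `v` of `G` is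
`S_G(v) * H`, and deleting `v` leaves `(G - v) * H`; symmetrically for vertices of `H`. So the
unit spheres are joins of lower-dimensional spheres, and the deletions are joins with a
contractible graph, which are contractible because a finite graph joined with a contractible
graph is contractible (peel off the vertices of the finite side one at a time).
-/

namespace SimpleGraph.Iso

variable {V W : Type*} {G : SimpleGraph V} {H : SimpleGraph W}

def induceNeighborSet (e : G ≃g H) (x : V) :
    G.induce (G.neighborSet x) ≃g H.induce (H.neighborSet (e x)) :=
  e.induce (e.toEquiv.bijOn fun _ => e.map_adj_iff)

def induceNe (e : G ≃g H) (x : V) : G.induce {y | y ≠ x} ≃g H.induce {y | y ≠ e x} :=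
  e.induce (e.toEquiv.bijOn fun _ => e.injective.ne_iff)

end SimpleGraph.Iso

section Contractible

variable {V W : Type u} {G : SimpleGraph V} {H : SimpleGraph W}

theorem ContractibleFuel.mono {n m : ℕ} (h : ContractibleFuel n G) (hnm : n ≤ m) :
    ContractibleFuel m G := by
  induction n generalizing m V with
  | zero => exact h.elim
  | succ n ih =>
    obtain ⟨m, rfl⟩ : ∃ m', m = m' + 1 := ⟨m - 1, by omega⟩
    rcases h with h | ⟨x, hs, hd⟩
    · exact .inl h
    · exact .inr ⟨x, ih hs (by omega), ih hd (by omega)⟩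

theorem ContractibleFuel.of_iso {n : ℕ} (h : ContractibleFuel n G) (e : G ≃g H) :
    ContractibleFuel n H := by
  induction n generalizing V W with
  | zero => exact h.elim
  | succ n ih =>
    rcases h with ⟨hne, _⟩ | ⟨x, hs, hd⟩
    · exact .inl ⟨hne.map e, e.symm.injective.subsingleton⟩
    · exact .inr ⟨e x, ih hs (e.induceNeighborSet x), ih hd (e.induceNe x)⟩

theorem Contractible.of_iso (h : Contractible G) (e : G ≃g H) : Contractible H :=
  let ⟨n, hn⟩ := h
  ⟨n, hn.of_iso e⟩

theorem contractible_of_vertex (x : V) (hs : Contractible (G.induce (G.neighborSet x)))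
    (hd : Contractible (G.induce {y | y ≠ x})) : Contractible G :=
  let ⟨n₁, h₁⟩ := hs
  let ⟨n₂, h₂⟩ := hd
  ⟨max n₁ n₂ + 1, .inr ⟨x, h₁.mono (le_max_left _ _), h₂.mono (le_max_right _ _)⟩⟩

theorem finite_of_finite_subtype_ne {α : Type*} (x : α) (h : Finite {y // y ≠ x}) : Finite α := by
  classical exact Finite.of_equiv _ (Equiv.optionSubtypeNe x)

theorem ContractibleFuel.finite {n : ℕ} (h : ContractibleFuel n G) : Finite V := by
  induction n generalizing V with
  | zero => exact h.elim
  | succ n ih =>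
    rcases h with ⟨_, _⟩ | ⟨x, _, hd⟩
    · exact Finite.of_subsingleton
    · exact finite_of_finite_subtype_ne x (ih hd)

theorem Contractible.finite (h : Contractible G) : Finite V :=
  let ⟨_, hn⟩ := h
  hn.finite

end Contractible

section Sphere

variable {V W : Type u} {G : SimpleGraph V} {H : SimpleGraph W}

theorem SphereFuel.mono {n m s : ℕ} (h : SphereFuel n s G) (hnm : n ≤ m) : SphereFuel m s G := by
  induction n generalizing m s V with
  | zero => exact h.elim
  | succ n ih =>
    obtain ⟨m, rfl⟩ : ∃ m', m = m' + 1 := ⟨m - 1, by omega⟩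
    cases s with
    | zero => exact h
    | succ s =>
      obtain ⟨hne, hs, hd⟩ := h
      exact ⟨hne, fun x => ih (hs x) (by omega), hd⟩

theorem SphereFuel.of_iso {n s : ℕ} (h : SphereFuel n s G) (e : G ≃g H) : SphereFuel n s H := by
  induction n generalizing s V W with
  | zero => exact h.elim
  | succ n ih =>
    cases s with
    | zero =>
      have : IsEmpty V := h
      exact e.toEquiv.symm.isEmpty
    | succ s =>
      obtain ⟨hne, hs, hd⟩ := h
      refine ⟨hne.map e, fun x => ?_, fun x => ?_⟩
      all_goals obtain ⟨x, rfl⟩ := e.surjective x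
      · exact ih (hs x) (e.induceNeighborSet x)
      · exact (hd x).of_iso (e.induceNe x)

theorem finite_of_contractible_induce_ne [Nonempty V]
    (hd : ∀ x, Contractible (G.induce {y | y ≠ x})) : Finite V :=
  finite_of_finite_subtype_ne _ (hd (Classical.arbitrary V)).finite

theorem exists_sphereFuel_succ {s : ℕ} (hne : Nonempty V)
    (hs : ∀ x, ∃ n, SphereFuel n s (G.induce (G.neighborSet x)))
    (hd : ∀ x, Contractible (G.induce {y | y ≠ x})) : ∃ n, SphereFuel n (s + 1) G := by
  have : Finite V := finite_of_contractible_induce_ne hd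
  choose f hf using hs
  obtain ⟨M, hM⟩ := Finite.exists_le f
  exact ⟨M + 1, hne, fun x => (hf x).mono (hM x), hd⟩

end Sphere

section Join

variable {V W : Type u} (G : SimpleGraph V) (H : SimpleGraph W)

def graphJoinIsoOfIsEmpty [IsEmpty V] : graphJoin G H ≃g H where
  toEquiv := Equiv.emptySum V W
  map_rel_iff' := by
    rintro (v | w) (v' | w')
    · exact isEmptyElim v
    · exact isEmptyElim v
    · exact isEmptyElim v'
    · exact Iff.rfl

def graphJoinComm : graphJoin G H ≃g graphJoin H G where
  toEquiv := Equiv.sumComm V W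
  map_rel_iff' := by rintro (v | w) (v' | w') <;> exact Iff.rfl

variable {G H}

def graphJoinInduceIso (s : Set V) (t : Set (V ⊕ W)) (hinl : ∀ v, Sum.inl v ∈ t ↔ v ∈ s)
    (hinr : ∀ w, Sum.inr w ∈ t) : (graphJoin G H).induce t ≃g graphJoin (G.induce s) H where
  toFun a := match a with
    | ⟨.inl v, h⟩ => .inl ⟨v, (hinl v).1 h⟩
    | ⟨.inr w, _⟩ => .inr w
  invFun a := match a with
    | .inl v => ⟨.inl v, (hinl v).2 v.2⟩
    | .inr w => ⟨.inr w, hinr w⟩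
  left_inv := by rintro ⟨v | w, h⟩ <;> rfl
  right_inv := by rintro (v | w) <;> rfl
  map_rel_iff' := by rintro ⟨v | w, h⟩ ⟨v' | w', h'⟩ <;> exact Iff.rfl

def graphJoinNeighborSetInlIso (v : V) :
    (graphJoin G H).induce ((graphJoin G H).neighborSet (.inl v)) ≃g
      graphJoin (G.induce (G.neighborSet v)) H :=
  graphJoinInduceIso _ _ (fun _ => Iff.rfl) (fun _ => trivial)

def graphJoinInduceNeInlIso (v : V) :
    (graphJoin G H).induce {y | y ≠ .inl v} ≃g graphJoin (G.induce {y | y ≠ v}) H :=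
  graphJoinInduceIso _ _ (fun _ => Sum.inl_injective.ne_iff) (fun _ => Sum.inr_ne_inl)

def graphJoinNeighborSetInrIso (w : W) :
    (graphJoin G H).induce ((graphJoin G H).neighborSet (.inr w)) ≃g
      graphJoin G (H.induce (H.neighborSet w)) :=
  ((graphJoinComm G H).induceNeighborSet (.inr w)).trans
    ((graphJoinNeighborSetInlIso w).trans (graphJoinComm _ G))

def graphJoinInduceNeInrIso (w : W) :
    (graphJoin G H).induce {y | y ≠ .inr w} ≃g graphJoin G (H.induce {y | y ≠ w}) :=
  ((graphJoinComm G H).induceNe (.inr w)).trans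
    ((graphJoinInduceNeInlIso w).trans (graphJoinComm _ G))

theorem contractible_graphJoin_of_right [Finite V] (G : SimpleGraph V) (hH : Contractible H) :
    Contractible (graphJoin G H) := by
  induction hk : Nat.card V using Nat.strong_induction_on generalizing V with
  | _ k ih =>
    rcases isEmpty_or_nonempty V with hV | hV
    · exact hH.of_iso (graphJoinIsoOfIsEmpty G H).symm
    obtain ⟨x⟩ := hV
    refine contractible_of_vertex (.inl x) ?_ ?_
    · exact (ih _ (hk ▸ Finite.card_subtype_lt (x := x) G.irrefl) _ rfl).of_iso
        (graphJoinNeighborSetInlIso x).symm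
    · exact (ih _ (hk ▸ Finite.card_subtype_lt (x := x) (not_not.2 rfl)) _ rfl).of_iso
        (graphJoinInduceNeInlIso x).symm

theorem contractible_graphJoin_of_left [Finite W] (H : SimpleGraph W) (hG : Contractible G) :
    Contractible (graphJoin G H) :=
  (contractible_graphJoin_of_right H hG).of_iso (graphJoinComm H G)

theorem exists_sphereFuel_graphJoin {n m p q : ℕ} (hG : SphereFuel n p G)
    (hH : SphereFuel m q H) : ∃ k, SphereFuel k (p + q) (graphJoin G H) := by
  induction n generalizing m p q V W with
  | zero => exact hG.elim
  | succ n ihn =>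
  induction m generalizing p q W with
  | zero => exact hH.elim
  | succ m ihm =>
  match p, q, hG, hH with
  | 0, q, hG, hH =>
    have : IsEmpty V := hG
    exact ⟨m + 1, (Nat.zero_add q).symm ▸ hH.of_iso (graphJoinIsoOfIsEmpty G H).symm⟩
  | p, 0, hG, hH =>
    have : IsEmpty W := hH
    exact ⟨n + 1, hG.of_iso ((graphJoinComm G H).trans (graphJoinIsoOfIsEmpty H G)).symm⟩
  | s + 1, t + 1, hG@⟨hV, hGs, hGd⟩, hH@⟨hW, hHs, hHd⟩ =>
    have : Finite V := finite_of_contractible_induce_ne hGd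
    have : Finite W := finite_of_contractible_induce_ne hHd
    rw [show s + 1 + (t + 1) = s + 1 + t + 1 by omega]
    refine exists_sphereFuel_succ ⟨.inl hV.some⟩ ?_ ?_
    · rintro (v | w)
      · obtain ⟨k, hk⟩ := ihn (hGs v) hH
        rw [show s + (t + 1) = s + 1 + t by omega] at hk
        exact ⟨k, hk.of_iso (graphJoinNeighborSetInlIso v).symm⟩
      · obtain ⟨k, hk⟩ := ihm hG (hHs w)
        exact ⟨k, hk.of_iso (graphJoinNeighborSetInrIso w).symm⟩
    · rintro (v | w)
      · exact (contractible_graphJoin_of_left H (hGd v)).of_iso (graphJoinInduceNeInlIso v).symm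
      · exact (contractible_graphJoin_of_right G (hHd w)).of_iso (graphJoinInduceNeInrIso w).symm

end Join

/-- The join of a `p`-sphere and a `q`-sphere is a `(p+q+1)`-sphere; in particular
the join with the `0`-sphere (two isolated vertices), the suspension, turns a
`d`-sphere into a `(d+1)`-sphere. -/
theorem stmt4 {V W : Type u} (G : SimpleGraph V) (H : SimpleGraph W)
    (p q : ℤ) (hG : IsSphere p G) (hH : IsSphere q H) :
    IsSphere (p + q + 1) (graphJoin G H) := by
  obtain ⟨hp, n, hn⟩ := hG
  obtain ⟨hq, m, hm⟩ := hH
  refine ⟨by omega, ?_⟩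
  rw [show (p + q + 1 + 1).toNat = (p + 1).toNat + (q + 1).toNat by omega]
  exact exists_sphereFuel_graphJoin hn hm
end

section
/- Let G be a 2-graph (every unit sphere is a cyclic graph with at least 4 vertices) and f : V(G) → ℝ with c not in the image of f. Then in the level set graph {f = c} (vertices: edges and triangles of G on which f changes sign; adjacency: containment), every vertex has exactly two neighbors; hence {f = c} is a disjoint union of cycles. -/
universe u

/-- A `d`-graph: a finite simple graph in which every unit sphere is a `(d-1)`-sphere. -/
def IsDGraph (d : ℕ) {V : Type u} [Fintype V] (G : SimpleGraph V) : Prop :=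
  ∀ x : V, IsSphere ((d : ℤ) - 1) (G.induce (G.neighborSet x))

/-- `f` changes sign relative to `c` on the finite vertex set `S`. -/
def changesSign {V : Type u} (f : V → ℝ) (c : ℝ) (S : Finset V) : Prop :=
  (∃ v ∈ S, f v < c) ∧ (∃ v ∈ S, c < f v)

/-- The level-surface graph `{f = c}`: vertices are the simplices (cliques) of `G`
on which `f` changes sign relative to `c`; two simplices are adjacent when one is a
proper subset of the other. -/
def levelGraph {V : Type u} (G : SimpleGraph V) (f : V → ℝ) (c : ℝ) :
    SimpleGraph {s : Finset V // G.IsClique s ∧ changesSign f c s} where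
  Adj a b := a.1 ⊂ b.1 ∨ b.1 ⊂ a.1
  symm := ⟨fun a b h => h.symm⟩
  loopless := ⟨fun a h => by rcases h with h | h <;> exact ssubset_irrefl _ h⟩

lemma contractibleFuel_nonempty : ∀ (n : ℕ) {V : Type u} (G : SimpleGraph V),
    ContractibleFuel n G → Nonempty V := by
  intro n
  induction n with
  | zero => intro V G h; exact h.elim
  | succ n ih =>
    intro V G h
    rcases h with ⟨h1, _⟩ | ⟨x, _, _⟩
    · exact h1
    · exact ⟨x⟩

lemma contractible_edgeless {V : Type u} {G : SimpleGraph V}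
    (he : ∀ a b : V, ¬ G.Adj a b) (h : Contractible G) :
    Nonempty V ∧ Subsingleton V := by
  obtain ⟨n, hn⟩ := h
  cases n with
  | zero => exact hn.elim
  | succ n =>
    rcases hn with h1 | ⟨x, hx, -⟩
    · exact h1
    · obtain ⟨⟨y, hy⟩⟩ := contractibleFuel_nonempty n _ hx
      exact absurd hy (he x y)

lemma sphere0_structure {V : Type u} {G : SimpleGraph V} (n : ℕ) (h : SphereFuel n 1 G) :
    (∀ a b : V, ¬ G.Adj a b) ∧ ∃ p q : V, p ≠ q ∧ (∀ z : V, z = p ∨ z = q) := by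
  cases n with
  | zero => exact h.elim
  | succ n =>
    obtain ⟨hne, hsph, hcon⟩ := h
    have hedge : ∀ a b : V, ¬ G.Adj a b := by
      intro a b hab
      have h0 := hsph a
      cases n with
      | zero => exact h0.elim
      | succ m => exact h0.elim (⟨b, hab⟩ : ↥(G.neighborSet a))
    refine ⟨hedge, ?_⟩
    obtain ⟨x⟩ := hne
    have hc := contractible_edgeless (G := G.induce {y : V | y ≠ x})
      (fun a b h => hedge a.1 b.1 h) (hcon x)
    obtain ⟨⟨⟨y, hy⟩⟩, hsub⟩ := hc
    refine ⟨x, y, Ne.symm hy, ?_⟩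
    intro z
    by_cases hz : z = x
    · exact Or.inl hz
    · right
      have hz2 := hsub.elim (⟨z, hz⟩ : {y : V | y ≠ x}) ⟨y, hy⟩
      exact congrArg Subtype.val hz2
lemma two_graph_common {V : Type u} [Fintype V] {G : SimpleGraph V}
    (hG : IsDGraph 2 G) {a b : V} (hab : G.Adj a b) :
    ∃ p q : V, p ≠ q ∧ ¬ G.Adj p q ∧ (G.Adj a p ∧ G.Adj b p) ∧ (G.Adj a q ∧ G.Adj b q) ∧
      ∀ r : V, G.Adj a r → G.Adj b r → r = p ∨ r = q := by
  obtain ⟨-, n, hn⟩ := hG a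
  have hn2 : SphereFuel n 2 (G.induce (G.neighborSet a)) := by
    norm_num at hn; exact hn
  cases n with
  | zero => exact hn2.elim
  | succ n =>
    obtain ⟨-, hsph, -⟩ := hn2
    have hb : b ∈ G.neighborSet a := hab
    have h1 := hsph ⟨b, hb⟩
    obtain ⟨hedge, p', q', hne, hall⟩ := sphere0_structure n h1
    refine ⟨p'.1.1, q'.1.1, ?_, ?_, ⟨p'.1.2, p'.2⟩, ⟨q'.1.2, q'.2⟩, ?_⟩
    · intro h
      exact hne (Subtype.ext (Subtype.ext h))
    · exact hedge p' q'
    · intro r har hbr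
      have hz := hall ⟨⟨r, har⟩, hbr⟩
      rcases hz with hz | hz
      · exact Or.inl (congrArg (fun t => t.1.1) hz)
      · exact Or.inr (congrArg (fun t => t.1.1) hz)

lemma no_K4 {V : Type u} [Fintype V] {G : SimpleGraph V} (hG : IsDGraph 2 G)
    {a b x y : V} (hab : G.Adj a b) (hax : G.Adj a x) (hbx : G.Adj b x)
    (hay : G.Adj a y) (hby : G.Adj b y) (hxy : G.Adj x y) : False := by
  obtain ⟨p, q, hpq, hpqn, -, -, hall⟩ := two_graph_common hG hab
  rcases hall x hax hbx with hx | hx <;> rcases hall y hay hby with hy | hy <;>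
    subst hx <;> subst hy
  · exact G.irrefl hxy
  · exact hpqn hxy
  · exact hpqn hxy.symm
  · exact G.irrefl hxy
lemma card2_case {V : Type u} [Fintype V] [DecidableEq V] {G : SimpleGraph V}
    (hG : IsDGraph 2 G) (f : V → ℝ) (c : ℝ)
    {s : Finset V} (hcl : G.IsClique (↑s : Set V)) (hsign : changesSign f c s)
    {v w : V} (hvc : f v < c) (hwc : c < f w) (hs : s = {v, w}) :
    ((levelGraph G f c).neighborSet ⟨s, hcl, hsign⟩).ncard = 2 := by
  have hvw : v ≠ w := by rintro rfl; linarith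
  have hv : v ∈ s := by rw [hs]; simp
  have hw : w ∈ s := by rw [hs]; simp
  have hadj : G.Adj v w := hcl hv hw hvw
  obtain ⟨p, q, hpq, hpqn, ⟨hvp, hwp⟩, ⟨hvq, hwq⟩, hall⟩ := two_graph_common hG hadj
  have hps : p ∉ s := by rw [hs]; simp [hvp.ne', hwp.ne']
  have hqs : q ∉ s := by rw [hs]; simp [hvq.ne', hwq.ne']
  have hclp : G.IsClique (↑(insert p s) : Set V) := by
    rw [Finset.coe_insert]
    refine hcl.insert ?_
    intro z hz _
    rw [hs] at hz
    simp only [Finset.coe_insert, Finset.coe_singleton, Set.mem_insert_iff,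
      Set.mem_singleton_iff] at hz
    rcases hz with rfl | rfl
    · exact hvp.symm
    · exact hwp.symm
  have hclq : G.IsClique (↑(insert q s) : Set V) := by
    rw [Finset.coe_insert]
    refine hcl.insert ?_
    intro z hz _
    rw [hs] at hz
    simp only [Finset.coe_insert, Finset.coe_singleton, Set.mem_insert_iff,
      Set.mem_singleton_iff] at hz
    rcases hz with rfl | rfl
    · exact hvq.symm
    · exact hwq.symm
  have hsignp : changesSign f c (insert p s) :=
    ⟨⟨v, Finset.mem_insert_of_mem hv, hvc⟩, ⟨w, Finset.mem_insert_of_mem hw, hwc⟩⟩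
  have hsignq : changesSign f c (insert q s) :=
    ⟨⟨v, Finset.mem_insert_of_mem hv, hvc⟩, ⟨w, Finset.mem_insert_of_mem hw, hwc⟩⟩
  rw [Set.ncard_eq_two]
  refine ⟨⟨insert p s, hclp, hsignp⟩, ⟨insert q s, hclq, hsignq⟩, ?_, ?_⟩
  · intro h
    have h2 : insert p s = insert q s := congrArg Subtype.val h
    have h3 : p ∈ insert q s := h2 ▸ Finset.mem_insert_self p s
    rcases Finset.mem_insert.mp h3 with h4 | h4
    · exact hpq h4
    · exact hps h4
  · ext t
    obtain ⟨u, hucl, husign⟩ := t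
    rw [SimpleGraph.mem_neighborSet]
    show (s ⊂ u ∨ u ⊂ s) ↔ _
    simp only [Set.mem_insert_iff, Set.mem_singleton_iff, Subtype.mk.injEq]
    constructor
    · rintro (h | h)
      · obtain ⟨r, hru, hrs⟩ := Finset.exists_of_ssubset h
        have hrv : r ≠ v := fun hh => hrs (hh ▸ hv)
        have hrw : r ≠ w := fun hh => hrs (hh ▸ hw)
        have hvr : G.Adj v r := hucl (h.subset hv) hru hrv.symm
        have hwr : G.Adj w r := hucl (h.subset hw) hru hrw.symm
        have hr := hall r hvr hwr
        have huu : u = insert r s := by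
          apply Finset.Subset.antisymm
          · intro z hz
            by_cases hzs : z ∈ s
            · exact Finset.mem_insert_of_mem hzs
            · have hzv : z ≠ v := fun hh => hzs (hh ▸ hv)
              have hzw : z ≠ w := fun hh => hzs (hh ▸ hw)
              have hvz : G.Adj v z := hucl (h.subset hv) hz hzv.symm
              have hwz : G.Adj w z := hucl (h.subset hw) hz hzw.symm
              have hz2 := hall z hvz hwz
              have hzr : z = r := by
                by_contra hzr
                have hadjzr : G.Adj z r := hucl hz hru hzr
                rcases hz2 with rfl | rfl <;> rcases hr with h5 | h5 <;> subst h5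
                · exact G.irrefl hadjzr
                · exact hpqn hadjzr
                · exact hpqn hadjzr.symm
                · exact G.irrefl hadjzr
              rw [hzr]
              exact Finset.mem_insert_self r s
          · intro z hz
            rcases Finset.mem_insert.mp hz with rfl | hzs
            · exact hru
            · exact h.subset hzs
        rcases hr with rfl | rfl
        · exact Or.inl huu
        · exact Or.inr huu
      · exfalso
        obtain ⟨⟨v', hv', hv'c⟩, ⟨w', hw', hw'c⟩⟩ := husign
        have hne : v' ≠ w' := by rintro rfl; linarith
        have hsub : ({v', w'} : Finset V) ⊆ u := by
          intro z hz
          rcases Finset.mem_insert.mp hz with rfl | hz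
          · exact hv'
          · rw [Finset.mem_singleton.mp hz]; exact hw'
        have h2 : 2 ≤ u.card := by
          have := Finset.card_le_card hsub
          rwa [Finset.card_pair hne] at this
        have h3 : u.card < s.card := Finset.card_lt_card h
        rw [hs, Finset.card_pair hvw] at h3
        omega
    · rintro (h1 | h1) <;> subst h1
      · exact Or.inl (Finset.ssubset_insert hps)
      · exact Or.inl (Finset.ssubset_insert hqs)
lemma card3_case {V : Type u} [Fintype V] [DecidableEq V] {G : SimpleGraph V}
    (hG : IsDGraph 2 G) (f : V → ℝ) (c : ℝ)
    {s : Finset V} (hcl : G.IsClique (↑s : Set V)) (hsign : changesSign f c s)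
    {m o₁ o₂ : V} (hs : s = {m, o₁, o₂}) (hmo₁ : m ≠ o₁) (hmo₂ : m ≠ o₂) (ho : o₁ ≠ o₂)
    (hside : ∀ z₁ z₂ : V, z₁ ∈ ({o₁, o₂} : Finset V) → z₂ ∈ ({o₁, o₂} : Finset V) →
      ¬ changesSign f c {z₁, z₂})
    (hch₁ : changesSign f c {m, o₁}) (hch₂ : changesSign f c {m, o₂}) :
    ((levelGraph G f c).neighborSet ⟨s, hcl, hsign⟩).ncard = 2 := by
  have hm : m ∈ s := by rw [hs]; simp
  have ho1 : o₁ ∈ s := by rw [hs]; simp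
  have ho2 : o₂ ∈ s := by rw [hs]; simp
  have hsub1 : ({m, o₁} : Finset V) ⊆ s := by
    rw [hs]; intro z hz; simp at hz ⊢; tauto
  have hsub2 : ({m, o₂} : Finset V) ⊆ s := by
    rw [hs]; intro z hz; simp at hz ⊢; tauto
  have hcl1 : G.IsClique (↑({m, o₁} : Finset V) : Set V) :=
    hcl.subset (Finset.coe_subset.mpr hsub1)
  have hcl2 : G.IsClique (↑({m, o₂} : Finset V) : Set V) :=
    hcl.subset (Finset.coe_subset.mpr hsub2)
  have hno1 : o₂ ∉ ({m, o₁} : Finset V) := by simp [Ne.symm hmo₂, Ne.symm ho]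
  have hno2 : o₁ ∉ ({m, o₂} : Finset V) := by simp [Ne.symm hmo₁, ho]
  have hss1 : ({m, o₁} : Finset V) ⊂ s :=
    Finset.ssubset_iff_subset_ne.mpr ⟨hsub1, fun h => hno1 (by rw [h]; exact ho2)⟩
  have hss2 : ({m, o₂} : Finset V) ⊂ s :=
    Finset.ssubset_iff_subset_ne.mpr ⟨hsub2, fun h => hno2 (by rw [h]; exact ho1)⟩
  have hcard : s.card = 3 := by
    rw [hs, Finset.card_insert_of_notMem (by simp [hmo₁, hmo₂]), Finset.card_pair ho]
  rw [Set.ncard_eq_two]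
  refine ⟨⟨{m, o₁}, hcl1, hch₁⟩, ⟨{m, o₂}, hcl2, hch₂⟩, ?_, ?_⟩
  · intro h
    have h2 : ({m, o₁} : Finset V) = {m, o₂} := congrArg Subtype.val h
    exact hno2 (h2 ▸ (by simp : o₁ ∈ ({m, o₁} : Finset V)))
  · ext t
    obtain ⟨u, hucl, husign⟩ := t
    rw [SimpleGraph.mem_neighborSet]
    show (s ⊂ u ∨ u ⊂ s) ↔ _
    simp only [Set.mem_insert_iff, Set.mem_singleton_iff, Subtype.mk.injEq]
    constructor
    · rintro (h | h)
      · exfalso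
        obtain ⟨r, hru, hrs⟩ := Finset.exists_of_ssubset h
        have hrm : r ≠ m := fun hh => hrs (hh ▸ hm)
        have hro1 : r ≠ o₁ := fun hh => hrs (hh ▸ ho1)
        have hro2 : r ≠ o₂ := fun hh => hrs (hh ▸ ho2)
        exact no_K4 hG (hcl hm ho1 hmo₁) (hcl hm ho2 hmo₂) (hcl ho1 ho2 ho)
          (hucl (h.subset hm) hru hrm.symm) (hucl (h.subset ho1) hru hro1.symm)
          (hucl (h.subset ho2) hru hro2.symm)
      · obtain ⟨⟨a, ha, hac⟩, ⟨b, hb, hbc⟩⟩ := id husign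
        have hab : a ≠ b := by rintro rfl; linarith
        have habu : ({a, b} : Finset V) ⊆ u := by
          intro z hz; simp at hz; rcases hz with rfl | rfl <;> assumption
        have hu2 : u.card ≤ 2 := by
          have := Finset.card_lt_card h
          omega
        have huab : ({a, b} : Finset V) = u :=
          Finset.eq_of_subset_of_card_le habu (by rw [Finset.card_pair hab]; exact hu2)
        have has : a ∈ s := h.subset ha
        have hbs : b ∈ s := h.subset hb
        rw [hs] at has hbs
        simp only [Finset.mem_insert, Finset.mem_singleton] at has hbs
        have hmem : ∀ z₁ ∈ ({o₁, o₂} : Finset V), ∀ z₂ ∈ ({o₁, o₂} : Finset V),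
            u ≠ {z₁, z₂} := by
          intro z₁ hz₁ z₂ hz₂ hu
          exact hside z₁ z₂ hz₁ hz₂ (hu ▸ husign)
        rcases has with rfl | rfl | rfl <;> rcases hbs with rfl | rfl | rfl
        · exact absurd rfl hab
        · exact Or.inl huab.symm
        · exact Or.inr huab.symm
        · exact Or.inl (by rw [← huab, Finset.pair_comm])
        · exact absurd rfl hab
        · exact absurd huab.symm (hmem a (by simp) b (by simp))
        · exact Or.inr (by rw [← huab, Finset.pair_comm])
        · exact absurd huab.symm (hmem a (by simp) b (by simp))
        · exact absurd rfl hab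
    · rintro (h1 | h1) <;> subst h1
      · exact Or.inr hss1
      · exact Or.inr hss2

/-- In a `2`-graph (every unit sphere a `1`-sphere, i.e. a cycle of length `≥ 4`),
for `c` not in the image of `f`, every vertex of the level set graph `{f = c}`
(vertices: edges and triangles of `G` on which `f` changes sign, adjacency:
containment) has exactly two neighbors. -/
theorem stmt6 {V : Type u} [Fintype V] (G : SimpleGraph V)
    (hG : IsDGraph 2 G) (f : V → ℝ) (c : ℝ) (hc : ∀ v, f v ≠ c) :
    ∀ x, ((levelGraph G f c).neighborSet x).ncard = 2 := by
  classical
  intro x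
  obtain ⟨s, hcl, hsign⟩ := x
  obtain ⟨⟨v, hv, hvc⟩, ⟨w, hw, hwc⟩⟩ := id hsign
  have hvw : v ≠ w := by rintro rfl; linarith
  by_cases he : ∃ e ∈ s, e ≠ v ∧ e ≠ w
  · obtain ⟨e, hes, hev, hew⟩ := he
    have hs : s = {v, w, e} := by
      apply Finset.Subset.antisymm
      · intro z hz
        by_cases hzm : z = v ∨ z = w ∨ z = e
        · rcases hzm with rfl | rfl | rfl <;> simp
        · push_neg at hzm
          obtain ⟨hzv, hzw, hze⟩ := hzm
          exact absurd (no_K4 hG (hcl hv hw hvw) (hcl hv hes hev.symm)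
            (hcl hw hes hew.symm) (hcl hv hz hzv.symm) (hcl hw hz hzw.symm)
            (hcl hes hz hze.symm)) not_false
      · intro z hz
        simp at hz
        rcases hz with rfl | rfl | rfl <;> assumption
    rcases lt_or_gt_of_ne (hc e) with hec | hec
    · -- f e < c : minority is w
      have hs' : s = {w, v, e} := by rw [hs, Finset.insert_comm]
      refine card3_case hG f c hcl hsign hs' hvw.symm hew.symm hev.symm ?_ ?_ ?_
      · intro z₁ z₂ hz₁ hz₂ hch
        obtain ⟨-, b, hb, hbc⟩ := hch
        simp at hz₁ hz₂ hb
        rcases hb with rfl | rfl <;> rcases hz₁ with rfl | rfl <;>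
          first
          | linarith
          | (rcases hz₂ with rfl | rfl <;> linarith)
      · exact ⟨⟨v, by simp, hvc⟩, ⟨w, by simp, hwc⟩⟩
      · exact ⟨⟨e, by simp, hec⟩, ⟨w, by simp, hwc⟩⟩
    · -- c < f e : minority is v
      refine card3_case hG f c hcl hsign hs hvw hev.symm ?_ ?_ ?_ ?_
      · exact fun h => hew (h.symm)
      · intro z₁ z₂ hz₁ hz₂ hch
        obtain ⟨⟨a, ha, hac⟩, -⟩ := hch
        simp at hz₁ hz₂ ha
        rcases ha with rfl | rfl <;> rcases hz₁ with rfl | rfl <;>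
          first
          | linarith
          | (rcases hz₂ with rfl | rfl <;> linarith)
      · exact ⟨⟨v, by simp, hvc⟩, ⟨w, by simp, hwc⟩⟩
      · exact ⟨⟨v, by simp, hvc⟩, ⟨e, by simp, hec⟩⟩
  · push_neg at he
    have hs : s = {v, w} := by
      apply Finset.Subset.antisymm
      · intro z hz
        by_cases hzv : z = v
        · simp [hzv]
        · simp [he z hz hzv]
      · intro z hz
        simp at hz
        rcases hz with rfl | rfl <;> assumption
    exact card2_case hG f c hcl hsign hvc hwc hs
end

section
/- Let G be a d-graph and c not in the image of f : V(G) → ℝ. Assigning to each vertex of the level surface graph {f = c} the dimension of the corresponding simplex of G gives a proper graph coloring of {f = c} using at most d colors (the dimensions range over {1, ..., d}). -/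
universe u

open Classical in
lemma clique_erase_le {V : Type u} (G : SimpleGraph V) {T : Finset V} (hT : G.IsClique T)
    {x : V} (hx : x ∈ T) {s : ℕ}
    (hb : ∀ T' : Finset (G.neighborSet x), (G.induce (G.neighborSet x)).IsClique T' → T'.card ≤ s) :
    T.card ≤ s + 1 := by
  classical
  have hmem : ∀ y ∈ T.erase x, y ∈ G.neighborSet x := fun y hy =>
    hT hx (Finset.mem_of_mem_erase hy) (Finset.ne_of_mem_erase hy).symm
  set T' : Finset (G.neighborSet x) := (T.erase x).subtype (· ∈ G.neighborSet x) with hT'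
  have hclique : (G.induce (G.neighborSet x)).IsClique T' := by
    intro a ha b hb' hne
    have ha' : a.1 ∈ T.erase x := by simpa [hT', Finset.mem_subtype] using ha
    have hb'' : b.1 ∈ T.erase x := by simpa [hT', Finset.mem_subtype] using hb'
    have : G.Adj a.1 b.1 := hT (Finset.mem_of_mem_erase ha') (Finset.mem_of_mem_erase hb'')
      (fun h => hne (Subtype.ext h))
    simpa [SimpleGraph.comap_adj] using this
  have hcard : T'.card = (T.erase x).card := by
    rw [hT', Finset.card_subtype, Finset.filter_true_of_mem hmem]
  have := hb T' hclique
  have h2 : (T.erase x).card + 1 = T.card := Finset.card_erase_add_one hx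
  omega

lemma sphereFuel_clique_card : ∀ (n s : ℕ) {V : Type u} (G : SimpleGraph V),
    SphereFuel n s G → ∀ T : Finset V, G.IsClique T → T.card ≤ s := by
  intro n
  induction n with
  | zero => intro s V G h; exact h.elim
  | succ n ih =>
    intro s V G h T hT
    match s with
    | 0 =>
      have : IsEmpty V := h
      simp [Finset.eq_empty_of_isEmpty T]
    | s + 1 =>
      obtain ⟨-, h2, -⟩ := h
      rcases T.eq_empty_or_nonempty with rfl | ⟨x, hx⟩
      · simp
      · exact clique_erase_le G hT hx (fun T' hT' => ih s _ (h2 x) T' hT')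

/-- In a `d`-graph with `c` not in the image of `f`, assigning to each vertex of the
level surface graph `{f = c}` the dimension of the corresponding simplex (its
cardinality minus one) is a proper coloring using at most `d` colors: the dimensions
of sign-changing simplices lie in `{1, …, d}`, and adjacent vertices of `{f = c}`
get distinct dimensions. -/
theorem stmt7 {V : Type u} [Fintype V] (G : SimpleGraph V) (d : ℕ)
    (hG : IsDGraph d G) (f : V → ℝ) (c : ℝ) (hc : ∀ v, f v ≠ c) :
    (∀ x : {s : Finset V // G.IsClique s ∧ changesSign f c s},
        1 ≤ x.1.card - 1 ∧ x.1.card - 1 ≤ d) ∧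
    (∀ x y, (levelGraph G f c).Adj x y → x.1.card - 1 ≠ y.1.card - 1) := by
  have key : ∀ x : {s : Finset V // G.IsClique s ∧ changesSign f c s},
      2 ≤ x.1.card ∧ x.1.card ≤ d + 1 := by
    rintro ⟨T, hclique, ⟨v1, hv1, hv1'⟩, ⟨v2, hv2, hv2'⟩⟩
    have hne : v1 ≠ v2 := fun h => absurd (h ▸ hv1') (not_lt.mpr hv2'.le)
    constructor
    · exact Finset.one_lt_card.mpr ⟨v1, hv1, v2, hv2, hne⟩
    · obtain ⟨-, n, hn⟩ := hG v1
      have : ((d : ℤ) - 1 + 1).toNat = d := by omega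
      rw [this] at hn
      exact clique_erase_le G hclique hv1
        (fun T' hT' => sphereFuel_clique_card n d _ hn T' hT')
  refine ⟨fun x => by have := key x; omega, ?_⟩
  rintro x y (h | h) <;>
    have := Finset.card_lt_card h <;>
    have := (key x).1 <;> have := (key y).1 <;> omega
end

section
/- For a finite simple graph G and a locally injective function f : V(G) → ℝ, the sum over all vertices x of the symmetric index j_f(x) = (i_f(x) + i_{-f}(x))/2 equals the Euler characteristic of G, where i_g(x) = 1 - χ(S_g^-(x)) is the Poincaré–Hopf index. -/
/-!
Count cliques with signs, the empty clique included: `1 - χ(G) = ∑_{cliques s} (-1)^|s|`, and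
the cliques of `S_f^-(x)` are exactly the cliques of `G` inside it. Local injectivity makes `f`
injective on every clique, so each nonempty clique `t` has a unique vertex `x` at which `f` is
maximal, and `t ↦ t \ {x}` is a bijection onto the cliques of `S_f^-(x)`, changing the sign.
Summing over `x` gives Poincaré–Hopf, `∑ₓ i_f(x) = χ(G)`; since `-f` is locally injective too,
averaging the formulas for `f` and `-f` gives the theorem.
-/

open scoped Classical

universe u

/-- The Euler characteristic of a finite simple graph:
`χ(G) = ∑_k (-1)^k v_k`, where `v_k` is the number of `(k+1)`-cliques. -/
noncomputable def eulerChar {V : Type u} [Fintype V] (G : SimpleGraph V) : ℤ :=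
  ∑ k ∈ Finset.range (Fintype.card V),
    (-1 : ℤ) ^ k * ({s : Finset V | G.IsNClique (k + 1) s}.ncard : ℤ)

/-- `f` is locally injective: `f x ≠ f y` on every edge. -/
def LocallyInjective {V : Type u} (G : SimpleGraph V) (f : V → ℝ) : Prop :=
  ∀ ⦃x y : V⦄, G.Adj x y → f x ≠ f y

/-- The Poincaré–Hopf index `i_f(x) = 1 - χ(S_f^-(x))`, where `S_f^-(x)` is the
subgraph of the unit sphere induced by `{y ∈ S(x) : f y < f x}`. -/
noncomputable def phIndex {V : Type u} [Fintype V] (G : SimpleGraph V)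
    (f : V → ℝ) (x : V) : ℤ :=
  1 - eulerChar (G.induce {y : V | G.Adj x y ∧ f y < f x})

open Finset SimpleGraph

def IsStrictMaxOn {α β : Type*} [Preorder β] (f : α → β) (s : Finset α) (a : α) : Prop :=
  a ∈ s ∧ ∀ b ∈ s, b ≠ a → f b < f a

theorem Finset.sum_sum_filter_of_existsUnique {α β M : Type*} [Fintype α] [AddCommMonoid M]
    (s : Finset β) (p : α → β → Prop) (h : ∀ t ∈ s, ∃! a, p a t) (w : β → M) :
    ∑ a, ∑ t ∈ s with p a t, w t = ∑ t ∈ s, w t := by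
  rw [sum_comm' (t' := s) (s' := fun t => univ.filter (p · t)) (by simp [and_comm])]
  refine sum_congr rfl fun t ht => ?_
  obtain ⟨a, ha, huniq⟩ := h t ht
  rw [show univ.filter (p · t) = {a} from eq_singleton_iff_unique_mem.mpr
    ⟨by simpa using ha, fun b hb => huniq b (by simpa using hb)⟩, sum_singleton]

theorem LocallyInjective.neg {V : Type u} {G : SimpleGraph V} {f : V → ℝ}
    (hf : LocallyInjective G f) : LocallyInjective G (-f) :=
  fun _ _ hxy h => hf hxy (neg_injective h)

theorem LocallyInjective.existsUnique_isStrictMaxOn {V : Type u} {G : SimpleGraph V}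
    {f : V → ℝ} (hf : LocallyInjective G f) {t : Finset V} (hc : G.IsClique (t : Set V))
    (ht : t.Nonempty) : ∃! x, IsStrictMaxOn f t x := by
  obtain ⟨m, hm, hmax⟩ := t.exists_max_image f ht
  refine ⟨m, ⟨hm, fun y hy hym => (hmax y hy).lt_of_ne (hf (hc hm hy hym.symm)).symm⟩,
    fun x hx => ?_⟩
  by_contra hxm
  exact (hx.2 m hm (Ne.symm hxm)).not_ge (hmax x hx.1)

section EulerChar

variable {V : Type u} [Fintype V]

theorem eulerChar_eq_one_sub_sum_isClique (G : SimpleGraph V) :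
    eulerChar G = 1 - ∑ s ∈ univ.filter (fun s : Finset V => G.IsClique (s : Set V)),
      (-1 : ℤ) ^ #s := by
  have h_fiber (n : ℕ) : ∑ s ∈ univ.filter (fun s : Finset V => G.IsClique (s : Set V))
      with #s = n, (-1 : ℤ) ^ #s = (-1) ^ n * ({s : Finset V | G.IsNClique n s}.ncard : ℤ) := by
    rw [sum_congr rfl fun s hs => by rw [(mem_filter.mp hs).2], sum_const, nsmul_eq_mul,
      mul_comm, ← Set.ncard_coe_finset]
    congr 3
    ext s
    simp [isNClique_iff]
  have h_card : ∀ s ∈ univ.filter (fun s : Finset V => G.IsClique (s : Set V)),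
      #s ∈ range (Fintype.card V + 1) :=
    fun s _ => mem_range_succ_iff.mpr (card_le_univ s)
  rw [← sum_fiberwise_of_maps_to h_card, sum_range_succ']
  have h_zero : {s : Finset V | G.IsNClique 0 s} = {∅} := by ext; simp
  simp only [h_fiber, h_zero, Set.ncard_singleton, eulerChar, pow_succ]
  simp

theorem sum_isClique_induce {M : Type*} [AddCommMonoid M] (G : SimpleGraph V) (A : Set V)
    [Fintype A] (w : Finset V → M) :
    ∑ s ∈ univ.filter (fun s : Finset A => (G.induce A).IsClique (s : Set A)),
        w (s.map (Function.Embedding.subtype _))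
      = ∑ t ∈ univ.filter (fun t : Finset V => G.IsClique (t : Set V) ∧ (t : Set V) ⊆ A),
        w t := by
  refine sum_bij (fun s _ => s.map (Function.Embedding.subtype _)) ?_ ?_ ?_ fun _ _ => rfl
  · intro s hs
    simp only [mem_filter, mem_univ, true_and, isClique_induce_iff, coe_map] at hs ⊢
    exact ⟨hs, fun _ ⟨a, _, ha⟩ => ha ▸ a.2⟩
  · exact fun s _ s' _ h => Finset.map_injective _ h
  · intro t ht
    simp only [mem_filter, mem_univ, true_and] at ht
    refine ⟨t.subtype (· ∈ A), ?_, subtype_map_of_mem fun y hy => ht.2 hy⟩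
    simp only [mem_filter, mem_univ, true_and, isClique_induce_iff]
    rw [← Function.Embedding.coe_subtype, ← coe_map, subtype_map_of_mem fun y hy => ht.2 hy]
    exact ht.1

theorem eulerChar_induce (G : SimpleGraph V) (A : Set V) [Fintype A] :
    eulerChar (G.induce A) = 1 - ∑ t ∈ univ.filter
      (fun t : Finset V => G.IsClique (t : Set V) ∧ (t : Set V) ⊆ A), (-1 : ℤ) ^ #t := by
  rw [eulerChar_eq_one_sub_sum_isClique, ← sum_isClique_induce G A (fun t => (-1 : ℤ) ^ #t)]
  simp only [card_map]
  -- the two sides differ only in the decidability instances of their filters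
  congr!

theorem phIndex_eq_neg_sum_isStrictMaxOn (G : SimpleGraph V) (f : V → ℝ) (x : V) :
    phIndex G f x = -∑ t ∈ univ.filter (fun t : Finset V => G.IsClique (t : Set V)) with
      IsStrictMaxOn f t x, (-1 : ℤ) ^ #t := by
  have h_notMem {s : Finset V} (hs : (s : Set V) ⊆ {y | G.Adj x y ∧ f y < f x}) : x ∉ s :=
    fun hx => G.loopless.irrefl x (hs hx).1
  rw [phIndex, eulerChar_induce, sub_sub_cancel, ← sum_neg_distrib, filter_filter]
  refine sum_nbij' (insert x) (fun t => t.erase x) ?_ ?_ ?_ ?_ ?_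
  · intro s hs
    simp only [mem_filter, mem_univ, true_and] at hs ⊢
    obtain ⟨hc, hs⟩ := hs
    refine ⟨?_, mem_insert_self x s, fun y hy hyx => (hs ?_).2⟩
    · rw [coe_insert, isClique_insert]
      exact ⟨hc, fun y hy _ => (hs hy).1⟩
    · exact (mem_insert.mp hy).resolve_left hyx
  · intro t ht
    simp only [mem_filter, mem_univ, true_and] at ht ⊢
    obtain ⟨hc, hx, hmax⟩ := ht
    refine ⟨hc.subset (by simp), fun y hy => ?_⟩
    obtain ⟨hyx, hyt⟩ := mem_erase.mp hy
    exact ⟨hc hx hyt hyx.symm, hmax y hyt hyx⟩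
  · intro s hs
    exact erase_insert (h_notMem (mem_filter.mp hs).2.2)
  · intro t ht
    exact insert_erase (mem_filter.mp ht).2.2.1
  · intro s hs
    rw [card_insert_of_notMem (h_notMem (mem_filter.mp hs).2.2), pow_succ]
    ring

theorem sum_phIndex (G : SimpleGraph V) (f : V → ℝ) (hf : LocallyInjective G f) :
    ∑ x, phIndex G f x = eulerChar G := by
  set cliques := univ.filter (fun t : Finset V => G.IsClique (t : Set V)) with hcliques
  have h_empty : ∅ ∈ cliques := by simp [cliques]
  have h_top_nonempty (x : V) : cliques.filter (IsStrictMaxOn f · x)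
      = (cliques.erase ∅).filter (IsStrictMaxOn f · x) := by
    rw [filter_erase, erase_eq_of_notMem fun h => notMem_empty x (mem_filter.mp h).2.1]
  calc ∑ x, phIndex G f x
      = -∑ x, ∑ t ∈ cliques.erase ∅ with IsStrictMaxOn f t x, (-1 : ℤ) ^ #t := by
        simp only [phIndex_eq_neg_sum_isStrictMaxOn, ← hcliques, h_top_nonempty, sum_neg_distrib]
    _ = -∑ t ∈ cliques.erase ∅, (-1 : ℤ) ^ #t := by
        rw [sum_sum_filter_of_existsUnique _ _ fun t ht => hf.existsUnique_isStrictMaxOn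
          (mem_filter.mp (mem_of_mem_erase ht)).2 (nonempty_iff_ne_empty.mpr (ne_of_mem_erase ht))]
    _ = eulerChar G := by
        rw [eulerChar_eq_one_sub_sum_isClique, ← sum_erase_add _ _ h_empty]
        simp

end EulerChar

/-- For a locally injective `f`, the symmetric indices
`j_f(x) = (i_f(x) + i_{-f}(x))/2` sum up to the Euler characteristic of `G`. -/
theorem stmt8 {V : Type u} [Fintype V] (G : SimpleGraph V) (f : V → ℝ)
    (hf : LocallyInjective G f) :
    ∑ x : V, ((phIndex G f x : ℚ) + (phIndex G (-f) x : ℚ)) / 2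
      = (eulerChar G : ℚ) := by
  rw [← sum_div, sum_add_distrib]
  have h_sum {g : V → ℝ} (hg : LocallyInjective G g) :
      ∑ x, (phIndex G g x : ℚ) = eulerChar G :=
    mod_cast sum_phIndex G g hg
  rw [h_sum hf, h_sum hf.neg]
  ring
end

section
/- Every odd-dimensional d-graph has Euler characteristic zero: if G is a d-graph with d odd, then χ(G) = ∑_k (-1)^k v_k(G) = 0, where v_k is the number of (k+1)-cliques. -/
universe u

open scoped Classical

namespace EAux

variable {V : Type u}

/-- The finset of nonempty cliques of `G`. -/
noncomputable def cliquesF [Fintype V] (G : SimpleGraph V) : Finset (Finset V) :=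
  Finset.univ.filter (fun s => s.Nonempty ∧ G.IsClique (s : Set V))

lemma mem_cliquesF [Fintype V] {G : SimpleGraph V} {s : Finset V} :
    s ∈ cliquesF G ↔ s.Nonempty ∧ G.IsClique (s : Set V) := by
  simp [cliquesF]

lemma eulerChar_eq_sum [Fintype V] (G : SimpleGraph V) :
    eulerChar G = ∑ s ∈ cliquesF G, (-1 : ℤ) ^ (s.card + 1) := by
  classical
  rw [eulerChar]
  rw [← Finset.sum_fiberwise_of_maps_to (g := fun s : Finset V => s.card - 1)
      (t := Finset.range (Fintype.card V)) (fun s hs => ?maps) (fun s => (-1 : ℤ) ^ (s.card + 1))]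
  case maps =>
    rw [mem_cliquesF] at hs
    have h1 : 1 ≤ s.card := Finset.card_pos.mpr hs.1
    have h2 : s.card ≤ Fintype.card V := Finset.card_le_univ s
    show s.card - 1 ∈ Finset.range (Fintype.card V)
    rw [Finset.mem_range]
    omega
  refine Finset.sum_congr rfl fun k hk => ?_
  have hset : {s : Finset V | G.IsNClique (k + 1) s} =
      ((cliquesF G).filter (fun s => s.card - 1 = k) : Finset (Finset V)) := by
    ext s
    simp only [Set.mem_setOf_eq, Finset.coe_filter, Set.mem_setOf_eq, mem_cliquesF,
      SimpleGraph.isNClique_iff]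
    constructor
    · rintro ⟨hc, hcard⟩
      refine ⟨⟨Finset.card_pos.mp (by omega), hc⟩, by omega⟩
    · rintro ⟨⟨hne, hc⟩, hcard⟩
      have : 1 ≤ s.card := Finset.card_pos.mpr hne
      exact ⟨hc, by omega⟩
  rw [hset, Set.ncard_coe_finset]
  have hterm : ∑ s ∈ (cliquesF G).filter (fun s => s.card - 1 = k), (-1 : ℤ) ^ (s.card + 1)
      = ∑ _s ∈ (cliquesF G).filter (fun s => s.card - 1 = k), (-1 : ℤ) ^ k := by
    refine Finset.sum_congr rfl fun s hs => ?_
    have hs' := Finset.mem_filter.mp hs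
    have h1 : 1 ≤ s.card := Finset.card_pos.mpr ((mem_cliquesF.mp hs'.1).1)
    have h2 : s.card - 1 = k := hs'.2
    have : s.card + 1 = k + 2 := by omega
    rw [this, pow_succ, pow_succ]
    ring
  rw [hterm, Finset.sum_const, nsmul_eq_mul, mul_comm]

end EAux

namespace EAux
variable {V : Type u}

lemma isClique_induce_iff {G : SimpleGraph V} {S : Set V} {s : Finset ↥S} :
    (G.induce S).IsClique (s : Set ↥S) ↔
      G.IsClique ((s.map (Function.Embedding.subtype _) : Finset V) : Set V) := by
  simp only [SimpleGraph.isClique_iff, Finset.coe_map, Function.Embedding.coe_subtype,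
    Set.Pairwise, SimpleGraph.comap_adj]
  constructor
  · rintro h _ ⟨a, ha, rfl⟩ _ ⟨b, hb, rfl⟩ hne
    exact h ha hb (fun e => hne (by rw [e]))
  · intro h a ha b hb hne
    exact h ⟨a, ha, rfl⟩ ⟨b, hb, rfl⟩ (Subtype.coe_injective.ne_iff.mpr hne)

lemma eulerChar_induce [Fintype V] (G : SimpleGraph V) (S : Set V) [Fintype ↥S] :
    eulerChar (G.induce S) =
      ∑ s ∈ (cliquesF G).filter (fun s : Finset V => (↑s : Set V) ⊆ S), (-1 : ℤ) ^ (s.card + 1) := by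
  classical
  rw [eulerChar_eq_sum]
  refine Finset.sum_nbij' (i := fun s => s.map (Function.Embedding.subtype _))
    (j := fun t => t.subtype (· ∈ S)) ?_ ?_ ?_ ?_ ?_
  · intro s hs
    rw [mem_cliquesF] at hs
    rw [Finset.mem_filter, mem_cliquesF]
    refine ⟨⟨(Finset.map_nonempty).mpr hs.1, isClique_induce_iff.mp hs.2⟩, ?_⟩
    intro v hv
    rw [Finset.mem_coe, Finset.mem_map] at hv
    obtain ⟨a, _, rfl⟩ := hv
    exact a.2
  · intro t ht
    rw [Finset.mem_filter, mem_cliquesF] at ht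
    rw [mem_cliquesF]
    obtain ⟨⟨hne, hc⟩, hsub⟩ := ht
    constructor
    · obtain ⟨x, hx⟩ := hne
      exact ⟨⟨x, hsub hx⟩, by simp [Finset.mem_subtype, hx]⟩
    · rw [isClique_induce_iff]
      convert hc using 2
      ext v
      simp only [Finset.mem_map, Finset.mem_subtype, Function.Embedding.coe_subtype]
      constructor
      · rintro ⟨⟨a, haS⟩, hat, rfl⟩
        exact hat
      · intro hv
        exact ⟨⟨v, hsub hv⟩, hv, rfl⟩
  · intro s _
    ext a
    simp [Finset.mem_subtype]
  · intro t ht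
    rw [Finset.mem_filter, mem_cliquesF] at ht
    ext v
    simp only [Finset.mem_map, Finset.mem_subtype, Function.Embedding.coe_subtype]
    constructor
    · rintro ⟨⟨a, haS⟩, hat, rfl⟩
      exact hat
    · intro hv
      exact ⟨⟨v, ht.2 hv⟩, hv, rfl⟩
  · intro s _
    rw [Finset.card_map]

end EAux

namespace EAux
variable {V : Type u}

lemma isClique_insert_of_nbhd {G : SimpleGraph V} {x : V} {t : Finset V}
    (hc : G.IsClique (t : Set V)) (hsub : (↑t : Set V) ⊆ G.neighborSet x) :
    G.IsClique ((insert x t : Finset V) : Set V) := by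
  intro a ha b hb hab
  simp only [Finset.coe_insert, Set.mem_insert_iff, Finset.mem_coe] at ha hb
  rcases ha with rfl | ha
  · rcases hb with rfl | hb
    · exact absurd rfl hab
    · exact hsub hb
  · rcases hb with rfl | hb
    · exact (hsub ha).symm
    · exact hc ha hb hab

lemma eulerChar_delete [Fintype V] (G : SimpleGraph V) (x : V) :
    eulerChar G = eulerChar (G.induce {y : V | y ≠ x}) + 1
      - eulerChar (G.induce (G.neighborSet x)) := by
  classical
  rw [eulerChar_eq_sum, eulerChar_induce, eulerChar_induce]
  rw [← Finset.sum_filter_add_sum_filter_not (cliquesF G) (fun s => x ∉ s)]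
  have h1 : (cliquesF G).filter (fun s => x ∉ s)
      = (cliquesF G).filter (fun s : Finset V => (↑s : Set V) ⊆ {y : V | y ≠ x}) := by
    apply Finset.filter_congr
    intro s _
    simp only [Set.subset_def, Finset.mem_coe, Set.mem_setOf_eq]
    constructor
    · intro hx y hy
      exact fun e => hx (e ▸ hy)
    · intro h hx
      exact h x hx rfl
  rw [h1]
  have h2 : ∑ s ∈ (cliquesF G).filter (fun s => ¬ x ∉ s), (-1 : ℤ) ^ (s.card + 1)
      = 1 - ∑ s ∈ (cliquesF G).filter (fun s : Finset V => (↑s : Set V) ⊆ G.neighborSet x),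
          (-1 : ℤ) ^ (s.card + 1) := by
    set F := (cliquesF G).filter (fun s : Finset V => (↑s : Set V) ⊆ G.neighborSet x) with hF
    have hne : ∅ ∉ F := by
      intro h
      exact absurd (mem_cliquesF.mp (Finset.mem_filter.mp h).1).1 (by simp)
    have key : ∑ s ∈ (cliquesF G).filter (fun s => ¬ x ∉ s), (-1 : ℤ) ^ (s.card + 1)
        = ∑ t ∈ insert ∅ F, (-1 : ℤ) ^ t.card := by
      refine Finset.sum_nbij' (i := fun s => s.erase x) (j := fun t => insert x t)
        ?_ ?_ ?_ ?_ ?_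
      · intro s hs
        rw [Finset.mem_filter, not_not] at hs
        obtain ⟨hs, hxs⟩ := hs
        rw [mem_cliquesF] at hs
        show s.erase x ∈ insert ∅ F
        rcases Finset.eq_empty_or_nonempty (s.erase x) with he | hne'
        · rw [he]; exact Finset.mem_insert_self _ _
        · refine Finset.mem_insert_of_mem ?_
          rw [hF, Finset.mem_filter, mem_cliquesF]
          refine ⟨⟨hne', hs.2.subset (by simp [Finset.erase_subset, Finset.coe_subset])⟩, ?_⟩
          intro y hy
          rw [Finset.coe_erase, Set.mem_diff] at hy
          have hyx : y ≠ x := by simpa using hy.2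
          exact hs.2 hxs hy.1 (Ne.symm hyx)
      · intro t ht
        rw [Finset.mem_filter, not_not]
        rcases Finset.mem_insert.mp ht with rfl | htF
        · simp only [insert_empty_eq]
          rw [mem_cliquesF]
          exact ⟨⟨Finset.singleton_nonempty x, by simp⟩, Finset.mem_singleton_self x⟩
        · rw [hF, Finset.mem_filter, mem_cliquesF] at htF
          refine ⟨mem_cliquesF.mpr ⟨?_, ?_⟩, Finset.mem_insert_self x t⟩
          · exact (Finset.insert_nonempty x t)
          · exact isClique_insert_of_nbhd htF.1.2 htF.2
      · intro s hs
        rw [Finset.mem_filter, not_not] at hs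
        exact Finset.insert_erase hs.2
      · intro t ht
        have hxt : x ∉ t := by
          rcases Finset.mem_insert.mp ht with rfl | htF
          · simp
          · rw [hF, Finset.mem_filter] at htF
            intro hx
            have := htF.2 hx
            simp at this
        show (insert x t).erase x = t
        exact Finset.erase_insert hxt
      · intro s hs
        rw [Finset.mem_filter, not_not] at hs
        have h1 : 1 ≤ s.card := Finset.card_pos.mpr ⟨x, hs.2⟩
        have : s.card = (s.erase x).card + 1 := by
          rw [Finset.card_erase_of_mem hs.2]; omega
        rw [this, pow_succ, pow_succ]
        ring
    rw [key, Finset.sum_insert hne]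
    have : ∑ t ∈ F, (-1 : ℤ) ^ t.card = - ∑ t ∈ F, (-1 : ℤ) ^ (t.card + 1) := by
      rw [← Finset.sum_neg_distrib]
      exact Finset.sum_congr rfl fun t _ => by rw [pow_succ]; ring
    rw [this, Finset.card_empty, pow_zero]
    ring
  rw [h2]
  ring

end EAux

namespace EAux
variable {V : Type u}

lemma eulerChar_of_subsingleton [Fintype V] [Subsingleton V] (hne : Nonempty V)
    (G : SimpleGraph V) : eulerChar G = 1 := by
  classical
  obtain ⟨x⟩ := hne
  rw [eulerChar_eq_sum]
  have : cliquesF G = {{x}} := by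
    ext s
    rw [mem_cliquesF, Finset.mem_singleton]
    constructor
    · rintro ⟨⟨y, hy⟩, _⟩
      ext z
      simp only [Finset.mem_singleton]
      constructor
      · intro _; exact Subsingleton.elim z x
      · intro h; rw [h, Subsingleton.elim x y]; exact hy
    · rintro rfl
      exact ⟨Finset.singleton_nonempty x, by simp⟩
  rw [this, Finset.sum_singleton, Finset.card_singleton]
  norm_num

lemma contractibleFuel_euler : ∀ (n : ℕ) {V : Type u} [Fintype V] (G : SimpleGraph V),
    ContractibleFuel n G → eulerChar G = 1 := by
  intro n
  induction n with
  | zero => intro V _ G h; exact absurd h (by simp [ContractibleFuel])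
  | succ n ih =>
    intro V _ G h
    rw [ContractibleFuel] at h
    rcases h with ⟨hne, hsub⟩ | ⟨x, hnb, hdel⟩
    · exact eulerChar_of_subsingleton hne G
    · rw [eulerChar_delete G x, ih _ hnb, ih _ hdel]
      ring

lemma contractible_euler [Fintype V] {G : SimpleGraph V} (h : Contractible G) :
    eulerChar G = 1 := by
  obtain ⟨n, hn⟩ := h
  exact contractibleFuel_euler n G hn

lemma eulerChar_of_isEmpty [Fintype V] [IsEmpty V] (G : SimpleGraph V) : eulerChar G = 0 := by
  rw [eulerChar_eq_sum]
  have : cliquesF G = ∅ := by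
    ext s
    rw [mem_cliquesF]
    simp only [Finset.notMem_empty, iff_false]
    rintro ⟨⟨y, _⟩, _⟩
    exact IsEmpty.false y
  rw [this, Finset.sum_empty]

lemma sphereFuel_euler : ∀ (n : ℕ) (s : ℕ) {V : Type u} [Fintype V] (G : SimpleGraph V),
    SphereFuel n s G → eulerChar G = 1 - (-1 : ℤ) ^ s := by
  intro n
  induction n with
  | zero => intro s V _ G h; exact absurd h (by simp [SphereFuel])
  | succ n ih =>
    intro s V _ G h
    match s with
    | 0 =>
      rw [SphereFuel] at h
      have : IsEmpty V := h
      rw [eulerChar_of_isEmpty]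
      norm_num
    | (t + 1) =>
      rw [SphereFuel] at h
      obtain ⟨⟨x⟩, hnb, hdel⟩ := h
      rw [eulerChar_delete G x, ih t _ (hnb x), contractible_euler (hdel x)]
      rw [pow_succ]
      ring

end EAux

namespace EAux
variable {V : Type u}

/-- Transport an induced subgraph along a graph isomorphism. -/
def isoInduce {V V' : Type u} {G : SimpleGraph V} {G' : SimpleGraph V'} (e : G ≃g G')
    (S : Set V) (S' : Set V') (h : ∀ v, v ∈ S ↔ e v ∈ S') : G.induce S ≃g G'.induce S' where
  toEquiv := e.toEquiv.subtypeEquiv h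
  map_rel_iff' := by
    intro a b
    simp only [SimpleGraph.comap_adj, Function.Embedding.coe_subtype, Equiv.subtypeEquiv_apply]
    exact e.map_rel_iff

lemma contractibleFuel_iso : ∀ (n : ℕ) {V V' : Type u} {G : SimpleGraph V}
    {G' : SimpleGraph V'} (e : G ≃g G'), ContractibleFuel n G → ContractibleFuel n G' := by
  intro n
  induction n with
  | zero => intro _ _ _ _ _ h; exact absurd h (by simp [ContractibleFuel])
  | succ n ih =>
    intro V V' G G' e h
    rw [ContractibleFuel] at h ⊢
    rcases h with ⟨hne, hsub⟩ | ⟨x, hnb, hdel⟩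
    · refine Or.inl ⟨hne.map e.toEquiv, ⟨fun a b => ?_⟩⟩
      have := Subsingleton.elim (α := V) (e.toEquiv.symm a) (e.toEquiv.symm b)
      have := congrArg e.toEquiv this
      simpa using this
    · refine Or.inr ⟨e x, ?_, ?_⟩
      · refine ih (isoInduce e _ _ fun v => ?_) hnb
        simp only [SimpleGraph.mem_neighborSet]
        exact e.map_rel_iff.symm
      · refine ih (isoInduce e _ _ fun v => ?_) hdel
        simp only [Set.mem_setOf_eq]
        exact (EmbeddingLike.apply_eq_iff_eq e).symm.ne

lemma contractible_iso {V V' : Type u} {G : SimpleGraph V} {G' : SimpleGraph V'}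
    (e : G ≃g G') (h : Contractible G) : Contractible G' := by
  obtain ⟨n, hn⟩ := h
  exact ⟨n, contractibleFuel_iso n e hn⟩

lemma sphereFuel_iso : ∀ (n : ℕ) (s : ℕ) {V V' : Type u} {G : SimpleGraph V}
    {G' : SimpleGraph V'} (e : G ≃g G'), SphereFuel n s G → SphereFuel n s G' := by
  intro n
  induction n with
  | zero => intro _ _ _ _ _ _ h; exact absurd h (by simp [SphereFuel])
  | succ n ih =>
    intro s V V' G G' e h
    match s with
    | 0 =>
      rw [SphereFuel] at h ⊢
      exact Function.isEmpty e.toEquiv.symm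
    | (t + 1) =>
      rw [SphereFuel] at h ⊢
      obtain ⟨hne, hnb, hdel⟩ := h
      refine ⟨hne.map e.toEquiv, fun x' => ?_, fun x' => ?_⟩
      · have := ih t (isoInduce e (G.neighborSet (e.symm x'))
          (G'.neighborSet x') (fun v => ?_)) (hnb (e.symm x'))
        · exact this
        · simp only [SimpleGraph.mem_neighborSet]
          constructor
          · intro hv
            have := e.map_rel_iff.mpr hv
            rwa [RelIso.apply_symm_apply] at this
          · intro hv
            have := e.map_rel_iff.mp (by rwa [RelIso.apply_symm_apply] : G'.Adj (e (e.symm x')) (e v))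
            exact this
      · refine contractible_iso (isoInduce e {y | y ≠ e.symm x'} {y | y ≠ x'} fun v => ?_)
          (hdel (e.symm x'))
        simp only [Set.mem_setOf_eq]
        constructor
        · intro hv hc
          exact hv (by rw [← hc, RelIso.symm_apply_apply])
        · intro hv hc
          exact hv (by rw [hc, RelIso.apply_symm_apply])

/-- Collapse a doubly-induced subgraph. -/
noncomputable def isoInduceInduce (G : SimpleGraph V) (S : Set V) (T : Set ↥S) :
    (G.induce S).induce T ≃g G.induce (Subtype.val '' T) where
  toEquiv := Equiv.Set.image Subtype.val T Subtype.val_injective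
  map_rel_iff' := by
    intro a b
    simp only [SimpleGraph.comap_adj, Function.Embedding.coe_subtype, Equiv.Set.image_apply]

end EAux

namespace EAux
variable {V : Type u}

def linkSet (G : SimpleGraph V) (σ : Finset V) : Set V := {y | ∀ z ∈ σ, G.Adj y z}

lemma linkSet_singleton (G : SimpleGraph V) (x : V) :
    linkSet G {x} = G.neighborSet x := by
  ext y
  simp only [linkSet, Set.mem_setOf_eq, Finset.mem_singleton, forall_eq,
    SimpleGraph.mem_neighborSet]
  exact ⟨fun h => h.symm, fun h => h.symm⟩

lemma link_sphere : ∀ (k : ℕ) {V : Type u} (G : SimpleGraph V) (s : ℕ)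
    (_hloc : ∀ x : V, ∃ n, SphereFuel n s (G.induce (G.neighborSet x)))
    (σ : Finset V), σ.card = k + 1 → G.IsClique (σ : Set V) →
    k ≤ s ∧ ∃ m, SphereFuel m (s - k) (G.induce (linkSet G σ)) := by
  intro k
  induction k with
  | zero =>
    intro V G s hloc σ hcard _
    obtain ⟨x, rfl⟩ := Finset.card_eq_one.mp hcard
    rw [linkSet_singleton]
    exact ⟨Nat.zero_le s, hloc x⟩
  | succ k ih =>
    intro V G s hloc σ hcard hclique
    have hne : σ.Nonempty := Finset.card_pos.mp (by omega)
    obtain ⟨x, hx⟩ := hne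
    set τ : Finset V := σ.erase x with hτ
    have hτcard : τ.card = k + 1 := by
      rw [hτ, Finset.card_erase_of_mem hx]; omega
    have hτne : τ.Nonempty := Finset.card_pos.mp (by omega)
    have hτsub : ∀ z ∈ τ, z ∈ G.neighborSet x := by
      intro z hz
      have hzσ : z ∈ σ := Finset.mem_of_mem_erase hz
      have hzx : z ≠ x := Finset.ne_of_mem_erase hz
      exact hclique hx hzσ (Ne.symm hzx)
    -- the unit sphere at x
    obtain ⟨n, hn⟩ := hloc x
    set H := G.induce (G.neighborSet x) with hH
    have hHne : Nonempty ↥(G.neighborSet x) := by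
      obtain ⟨z, hz⟩ := hτne
      exact ⟨⟨z, hτsub z hz⟩⟩
    obtain ⟨t, rfl⟩ : ∃ t, s = t + 1 := by
      cases s with
      | zero =>
        exfalso
        cases n with
        | zero => exact (by simpa [SphereFuel] using hn : False)
        | succ n => exact (by rw [SphereFuel] at hn; exact hn.false hHne.some)
      | succ t => exact ⟨t, rfl⟩
    have hnpos : ∃ n', ∀ y, SphereFuel n' t (H.induce (H.neighborSet y)) := by
      cases n with
      | zero => exact absurd hn (by simp [SphereFuel])
      | succ n' =>
        rw [SphereFuel] at hn
        exact ⟨n', hn.2.1⟩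
    obtain ⟨n', hlocH⟩ := hnpos
    -- the clique τ inside H
    set τ' : Finset ↥(G.neighborSet x) := τ.subtype (· ∈ G.neighborSet x) with hτ'
    have hmem : ∀ a : ↥(G.neighborSet x), a ∈ τ' ↔ (a : V) ∈ τ := by
      intro a; simp [hτ', Finset.mem_subtype]
    have hτ'card : τ'.card = k + 1 := by
      rw [← hτcard, hτ', Finset.card_subtype, Finset.filter_true_of_mem hτsub]
    have hτ'clique : H.IsClique (τ' : Set ↥(G.neighborSet x)) := by
      intro a ha b hb hab
      rw [Finset.mem_coe, hmem] at ha hb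
      show G.Adj (a : V) (b : V)
      exact hclique (Finset.mem_of_mem_erase ha) (Finset.mem_of_mem_erase hb)
        (Subtype.coe_injective.ne_iff.mpr hab)
    obtain ⟨hkt, m, hm⟩ := ih H t (fun y => ⟨n', hlocH y⟩) τ' hτ'card hτ'clique
    refine ⟨by omega, ?_⟩
    have hset : Subtype.val '' (linkSet H τ') = linkSet G σ := by
      ext y
      constructor
      · rintro ⟨⟨y, hyx⟩, hy, rfl⟩
        intro z hz
        rcases eq_or_ne z x with rfl | hzx
        · exact (hyx : G.Adj z y).symm
        · have hzτ : z ∈ τ := Finset.mem_erase.mpr ⟨hzx, hz⟩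
          exact hy ⟨z, hτsub z hzτ⟩ ((hmem _).mpr hzτ)
      · intro hy
        have hyx : y ∈ G.neighborSet x := (hy x hx).symm
        refine ⟨⟨y, hyx⟩, ?_, rfl⟩
        intro z hz
        exact hy (z : V) (Finset.mem_of_mem_erase ((hmem z).mp hz))
    have hiso := isoInduceInduce G (G.neighborSet x) (linkSet H τ')
    rw [hset] at hiso
    refine ⟨m, sphereFuel_iso m _ hiso ?_⟩
    have : t + 1 - (k + 1) = t - k := by omega
    rw [this]
    exact hm

end EAux


namespace EAux

noncomputable def u : ℕ → ℚ
  | 0 => 0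
  | (m+1) => (2 - ∑ k ∈ (Finset.range (m+1)).attach, (((m+1).choose k.1 : ℚ)) * u k.1) / 2
  termination_by m => m
  decreasing_by exact Finset.mem_range.mp k.2

lemma u_zero : u 0 = 0 := by rw [u]

lemma u_succ (m : ℕ) : u (m+1) =
    (2 - ∑ k ∈ Finset.range (m+1), (((m+1).choose k : ℚ)) * u k) / 2 := by
  rw [u, ← Finset.sum_attach (Finset.range (m+1)) (fun k => (((m+1).choose k : ℚ)) * u k)]

/-- the defining relation: `∑_{k ≤ m} C(m,k) u_k + u_m = 2` for `m ≥ 1`. -/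
lemma u_rec (m : ℕ) (hm : 1 ≤ m) :
    (∑ k ∈ Finset.range (m+1), ((m.choose k : ℚ)) * u k) + u m = 2 := by
  obtain ⟨m', rfl⟩ := Nat.exists_eq_add_of_le hm
  rw [Finset.sum_range_succ, Nat.choose_self]
  have := u_succ m'
  have h2 : (∑ k ∈ Finset.range (1 + m'), (((1+m').choose k : ℚ)) * u k) = 2 - 2 * u (1+m') := by
    rw [Nat.add_comm 1 m'] at *
    rw [u_succ m']
    ring
  rw [h2]
  push_cast
  ring

lemma cast_alternating (n : ℕ) (hn : n ≠ 0) :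
    ∑ i ∈ Finset.range (n+1), (-1 : ℚ)^i * (n.choose i : ℚ) = 0 := by
  have := Int.alternating_sum_range_choose_of_ne hn
  have : ((∑ i ∈ Finset.range (n + 1), ((-1) ^ i * ↑(n.choose i) : ℤ) : ℤ) : ℚ) = 0 := by
    rw [this]; norm_num
  push_cast at this
  exact this

lemma neg_one_pow_sub (R : Type*) [Monoid R] [HasDistribNeg R] {i n : ℕ} (h : i ≤ n) :
    (-1 : R)^(n - i) = (-1)^n * (-1)^i := by
  have h1 : (-1 : R)^(n-i) * (-1)^i = (-1)^n := by
    rw [← pow_add, Nat.sub_add_cancel h]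
  have h2 : ((-1 : R)^i) * ((-1)^i) = 1 := by
    rw [← pow_add, Even.neg_one_pow ⟨i, rfl⟩]
  calc (-1 : R)^(n-i) = (-1 : R)^(n-i) * ((-1)^i * (-1)^i) := by rw [h2, mul_one]
    _ = ((-1 : R)^(n-i) * (-1)^i) * (-1)^i := by rw [mul_assoc]
    _ = (-1)^n * (-1)^i := by rw [h1]

lemma alternating_shifted (n : ℕ) (hn : n ≠ 0) :
    ∑ i ∈ Finset.range (n+1), (-1 : ℚ)^(n - i) * (n.choose i : ℚ) = 0 := by
  have : ∀ i ∈ Finset.range (n+1), (-1 : ℚ)^(n-i) * (n.choose i : ℚ)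
      = (-1)^n * ((-1)^i * (n.choose i : ℚ)) := by
    intro i hi
    rw [neg_one_pow_sub ℚ (Nat.lt_succ_iff.mp (Finset.mem_range.mp hi))]
    ring
  rw [Finset.sum_congr rfl this, ← Finset.mul_sum, cast_alternating n hn, mul_zero]

/-- orthogonality: `∑_j (-1)^(m-j) C(m,j) C(j,k) = δ_{k m}` for `k ≤ m`. -/
lemma delta_identity (m k : ℕ) (hk : k ≤ m) :
    ∑ j ∈ Finset.range (m+1), (-1 : ℚ)^(m - j) * (m.choose j : ℚ) * (j.choose k : ℚ)
      = if k = m then 1 else 0 := by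
  rcases eq_or_lt_of_le hk with rfl | hlt
  · rw [if_pos rfl]
    rw [Finset.sum_eq_single k]
    · simp
    · intro j hj hne
      have hj' : j < k + 1 := Finset.mem_range.mp hj
      have : j < k := by omega
      rw [Nat.choose_eq_zero_of_lt this]
      norm_num
    · intro h; exact absurd (Finset.self_mem_range_succ k) h
  · rw [if_neg (by omega)]
    have hsplit : Finset.range (m+1) = Finset.Ico 0 k ∪ Finset.Ico k (m+1) := by
      rw [Finset.range_eq_Ico, ← Finset.Ico_union_Ico_eq_Ico (Nat.zero_le k) (by omega)]
    rw [hsplit, Finset.sum_union (by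
      simp [Finset.disjoint_left]
      intro a ha hk'; omega)]
    have h1 : ∑ j ∈ Finset.Ico 0 k, (-1 : ℚ)^(m - j) * (m.choose j : ℚ) * (j.choose k : ℚ) = 0 := by
      refine Finset.sum_eq_zero fun j hj => ?_
      have : j < k := by simpa using (Finset.mem_Ico.mp hj).2
      rw [Nat.choose_eq_zero_of_lt this]
      norm_num
    rw [h1, zero_add]
    rw [Finset.sum_Ico_eq_sum_range]
    have hrw : ∀ i ∈ Finset.range (m + 1 - k),
        (-1 : ℚ)^(m - (k+i)) * (m.choose (k+i) : ℚ) * ((k+i).choose k : ℚ)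
          = (m.choose k : ℚ) * ((-1 : ℚ)^((m-k) - i) * ((m-k).choose i : ℚ)) := by
      intro i hi
      have hi' : i < m + 1 - k := Finset.mem_range.mp hi
      have h1 : k + i ≤ m := by omega
      have hmul := Nat.choose_mul (n := m) (k := k + i) (s := k) (Nat.le_add_right k i)
      have hmul' : (m.choose (k+i) : ℚ) * ((k+i).choose k : ℚ)
          = (m.choose k : ℚ) * ((m-k).choose (k + i - k) : ℚ) := by
        exact_mod_cast congrArg (Nat.cast : ℕ → ℚ) hmul
      have h3 : k + i - k = i := by omega
      have h4 : m - (k + i) = (m - k) - i := by omega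
      rw [h4]
      calc (-1 : ℚ)^((m-k) - i) * (m.choose (k+i) : ℚ) * ((k+i).choose k : ℚ)
          = (-1 : ℚ)^((m-k) - i) * ((m.choose (k+i) : ℚ) * ((k+i).choose k : ℚ)) := by ring
        _ = (-1 : ℚ)^((m-k) - i) * ((m.choose k : ℚ) * ((m-k).choose i : ℚ)) := by
            rw [hmul', h3]
        _ = (m.choose k : ℚ) * ((-1 : ℚ)^((m-k) - i) * ((m-k).choose i : ℚ)) := by ring
    have heq : ∀ i ∈ Finset.range (m + 1 - k), (-1 : ℚ)^(m - (0 + (k + i)))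
        * (m.choose (0 + (k + i)) : ℚ) * ((0 + (k + i)).choose k : ℚ)
          = (m.choose k : ℚ) * ((-1 : ℚ)^((m-k) - i) * ((m-k).choose i : ℚ)) := by
      intro i hi
      simpa using hrw i hi
    rw [Finset.sum_congr rfl (fun i hi => by
      simpa using hrw i (by simpa using hi))]
    rw [← Finset.mul_sum]
    have hmk : m - k ≠ 0 := by omega
    have hrange : m + 1 - k = (m - k) + 1 := by omega
    rw [hrange, alternating_shifted (m-k) hmk, mul_zero]

end EAux

namespace EAux

lemma Fval_zero : (∑ k ∈ Finset.range 1, ((Nat.choose 0 k : ℚ)) * u k) + u 0 = 0 := by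
  simp [u_zero]

lemma u_reflect (m : ℕ) (hm : 1 ≤ m) :
    u m + ∑ j ∈ Finset.range (m+1), (-1:ℚ)^(m-j) * (m.choose j : ℚ) * u j
      = -2 * (-1:ℚ)^m := by
  have hm0 : m ≠ 0 := by omega
  set Fval : ℕ → ℚ :=
    fun j => (∑ k ∈ Finset.range (j+1), ((j.choose k : ℚ)) * u k) + u j with hFval
  have hS : ∑ j ∈ Finset.range (m+1), (-1:ℚ)^(m-j) * (m.choose j : ℚ) * Fval j
      = -2 * (-1:ℚ)^m := by
    have hterm : ∀ j ∈ Finset.range (m+1), (-1:ℚ)^(m-j) * (m.choose j : ℚ) * Fval j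
        = 2 * ((-1:ℚ)^(m-j) * (m.choose j : ℚ)) - (if j = 0 then 2 * (-1:ℚ)^m else 0) := by
      intro j hj
      rcases Nat.eq_zero_or_pos j with rfl | hjpos
      · rw [if_pos rfl, hFval]
        simp [u_zero]
      · rw [if_neg (by omega), hFval]
        show (-1:ℚ)^(m-j) * (m.choose j : ℚ)
            * ((∑ k ∈ Finset.range (j+1), ((j.choose k : ℚ)) * u k) + u j) = _
        rw [u_rec j hjpos]
        ring
    rw [Finset.sum_congr rfl hterm, Finset.sum_sub_distrib, ← Finset.mul_sum,
      alternating_shifted m hm0, Finset.sum_ite_eq' (Finset.range (m+1)) 0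
        (fun _ => 2 * (-1:ℚ)^m)]
    simp
  -- now expand Fval inside hS
  have hexp : ∑ j ∈ Finset.range (m+1), (-1:ℚ)^(m-j) * (m.choose j : ℚ) * Fval j
      = u m + ∑ j ∈ Finset.range (m+1), (-1:ℚ)^(m-j) * (m.choose j : ℚ) * u j := by
    rw [hFval]
    have hsplit : ∀ j ∈ Finset.range (m+1), (-1:ℚ)^(m-j) * (m.choose j : ℚ) *
        ((∑ k ∈ Finset.range (j+1), ((j.choose k : ℚ)) * u k) + u j)
        = (∑ k ∈ Finset.range (m+1),
            (-1:ℚ)^(m-j) * (m.choose j : ℚ) * (j.choose k : ℚ) * u k)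
          + (-1:ℚ)^(m-j) * (m.choose j : ℚ) * u j := by
      intro j hj
      have hjm : j ≤ m := by
        have := Finset.mem_range.mp hj; omega
      have hinner : (∑ k ∈ Finset.range (j+1), ((j.choose k : ℚ)) * u k)
          = ∑ k ∈ Finset.range (m+1), ((j.choose k : ℚ)) * u k := by
        refine Finset.sum_subset ?_ ?_
        · intro a ha
          rw [Finset.mem_range] at *
          omega
        · intro a _ ha
          rw [Finset.mem_range, not_lt] at ha
          rw [Nat.choose_eq_zero_of_lt (by omega)]
          norm_num
      rw [hinner, mul_add, Finset.mul_sum]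
      congr 1
      exact Finset.sum_congr rfl fun k _ => by ring
    rw [Finset.sum_congr rfl hsplit, Finset.sum_add_distrib]
    congr 1
    rw [Finset.sum_comm]
    have hcol : ∀ k ∈ Finset.range (m+1),
        (∑ j ∈ Finset.range (m+1), (-1:ℚ)^(m-j) * (m.choose j : ℚ) * (j.choose k : ℚ) * u k)
        = (if k = m then 1 else 0) * u k := by
      intro k hk
      have hkm : k ≤ m := by have := Finset.mem_range.mp hk; omega
      rw [← delta_identity m k hkm, Finset.sum_mul]
    rw [Finset.sum_congr rfl hcol]
    rw [Finset.sum_congr rfl (fun k _ => show (if k = m then (1:ℚ) else 0) * u k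
      = (if k = m then u k else 0) from by split_ifs <;> ring)]
    rw [Finset.sum_ite_eq' (Finset.range (m+1)) m u]
    simp
  rw [← hexp, hS]

lemma u_even_zero : ∀ m, Even m → u m = 0 := by
  intro m
  induction m using Nat.strong_induction_on with
  | _ m ih =>
    intro hme
    rcases Nat.eq_zero_or_pos m with rfl | hm1
    · exact u_zero
    have hG := u_reflect m hm1
    have hF := u_rec m hm1
    rw [Finset.sum_range_succ] at hG hF
    have hsign : ∀ j ∈ Finset.range m, (-1:ℚ)^(m-j) * (m.choose j : ℚ) * u j
        = -((m.choose j : ℚ) * u j) := by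
      intro j hj
      have hj' : j < m := Finset.mem_range.mp hj
      rcases Nat.even_or_odd j with hje | hjo
      · rw [ih j hj' hje]; ring
      · rw [neg_one_pow_sub ℚ (le_of_lt hj'), Even.neg_one_pow hme, Odd.neg_one_pow hjo]
        ring
    rw [Finset.sum_congr rfl hsign] at hG
    rw [Finset.sum_neg_distrib] at hG
    rw [Nat.sub_self, pow_zero, Nat.choose_self, Even.neg_one_pow hme] at hG
    push_cast at hG hF
    -- hG : u m + (-(B) + 1 * u m) = -2 * 1 ;  hF : (B + 1 * u m) + u m = 2
    nlinarith [hG, hF]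

lemma u_mul_neg_pow (k : ℕ) : u k * (-1:ℚ)^k = - u k := by
  rcases Nat.even_or_odd k with hke | hko
  · rw [u_even_zero k hke]; ring
  · rw [Odd.neg_one_pow hko]; ring

end EAux


namespace EAux
variable {V : Type u}

lemma isClique_union {G : SimpleGraph V} {σ τ : Finset V}
    (hσ : G.IsClique (σ : Set V)) (hτ : G.IsClique (τ : Set V))
    (hsub : (↑τ : Set V) ⊆ linkSet G σ) :
    G.IsClique ((σ ∪ τ : Finset V) : Set V) := by
  intro a ha b hb hab
  rw [Finset.coe_union, Set.mem_union] at ha hb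
  rcases ha with ha | ha <;> rcases hb with hb | hb
  · exact hσ ha hb hab
  · exact (hsub hb a ha).symm
  · exact hsub ha b hb
  · exact hτ ha hb hab

theorem main {V : Type u} [Fintype V] (G : SimpleGraph V) (d : ℕ)
    (hd : Odd d) (hG : IsDGraph d G) : eulerChar G = 0 := by
  classical
  -- local sphere data
  have hloc : ∀ x : V, ∃ n, SphereFuel n d (G.induce (G.neighborSet x)) := by
    intro x
    obtain ⟨-, n, hn⟩ := hG x
    have hcast : ((d : ℤ) - 1 + 1).toNat = d := by omega
    rw [hcast] at hn
    exact ⟨n, hn⟩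
  -- Euler characteristic of the link of each clique
  have hlink : ∀ σ ∈ cliquesF G,
      ((eulerChar (G.induce (linkSet G σ)) : ℤ) : ℚ) = 1 - (-1 : ℚ) ^ σ.card := by
    intro σ hσ
    rw [mem_cliquesF] at hσ
    have hcard : σ.card = (σ.card - 1) + 1 := by
      have := Finset.card_pos.mpr hσ.1; omega
    obtain ⟨hkd, m, hm⟩ := link_sphere (σ.card - 1) G d hloc σ hcard hσ.2
    have := sphereFuel_euler m (d - (σ.card - 1)) (G.induce (linkSet G σ)) hm
    rw [this]
    push_cast
    have hsign : (-1 : ℚ) ^ (d - (σ.card - 1)) = (-1 : ℚ) ^ σ.card := by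
      set k := σ.card - 1 with hk
      have h1 : (-1 : ℚ) ^ (d - k) * (-1 : ℚ)^k = (-1 : ℚ)^d := by
        rw [← pow_add, Nat.sub_add_cancel hkd]
      have h2 : ((-1 : ℚ)^k) * ((-1)^k) = 1 := by
        rw [← pow_add, Even.neg_one_pow ⟨k, rfl⟩]
      have h3 : (-1 : ℚ)^d = -1 := Odd.neg_one_pow hd
      calc (-1 : ℚ)^(d-k) = (-1 : ℚ)^(d-k) * ((-1)^k * (-1)^k) := by rw [h2, mul_one]
        _ = ((-1 : ℚ)^(d-k) * (-1)^k) * (-1)^k := by rw [mul_assoc]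
        _ = -((-1 : ℚ)^k) := by rw [h1, h3]; ring
        _ = (-1 : ℚ)^(k+1) := by rw [pow_succ]; ring
        _ = (-1 : ℚ)^σ.card := by rw [← hcard]
    rw [hsign]
  -- the master sum, evaluated via the sphere property of links
  set Stot : ℚ := ∑ σ ∈ cliquesF G, u σ.card * ((eulerChar (G.induce (linkSet G σ)) : ℤ) : ℚ)
    with hStot
  have way1 : Stot = ∑ σ ∈ cliquesF G, 2 * u σ.card := by
    rw [hStot]
    refine Finset.sum_congr rfl fun σ hσ => ?_
    rw [hlink σ hσ]
    have := u_mul_neg_pow σ.card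
    calc u σ.card * (1 - (-1 : ℚ)^σ.card)
        = u σ.card - u σ.card * (-1 : ℚ)^σ.card := by ring
      _ = u σ.card - (- u σ.card) := by rw [this]
      _ = 2 * u σ.card := by ring
  -- expand each link Euler characteristic as a sum over cliques of the link
  have hexpand : ∀ σ ∈ cliquesF G,
      ((eulerChar (G.induce (linkSet G σ)) : ℤ) : ℚ)
        = ∑ τ ∈ (cliquesF G).filter (fun τ : Finset V => (↑τ : Set V) ⊆ linkSet G σ),
            (-1 : ℚ) ^ (τ.card + 1) := by
    intro σ _
    rw [eulerChar_induce G (linkSet G σ)]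
    push_cast
    rfl
  have way2 : Stot = ∑ ρ ∈ cliquesF G, (2 * (-1 : ℚ)^ρ.card + 2 * u ρ.card) := by
    rw [hStot, Finset.sum_congr rfl (fun σ hσ => by rw [hexpand σ hσ])]
    -- turn into a sum over pairs
    have hstep : ∑ σ ∈ cliquesF G, u σ.card *
        (∑ τ ∈ (cliquesF G).filter (fun τ : Finset V => (↑τ : Set V) ⊆ linkSet G σ),
          (-1 : ℚ) ^ (τ.card + 1))
        = ∑ ρ ∈ cliquesF G,
            ∑ σ ∈ ρ.powerset.filter (fun σ => σ.Nonempty ∧ σ ≠ ρ),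
              u σ.card * (-1 : ℚ) ^ ((ρ.card - σ.card) + 1) := by
      rw [Finset.sum_congr rfl (fun σ _ => Finset.mul_sum _ _ _)]
      rw [Finset.sum_sigma', Finset.sum_sigma']
      refine Finset.sum_nbij' (i := fun p => (⟨p.1 ∪ p.2, p.1⟩ : Σ _ : Finset V, Finset V))
        (j := fun p => (⟨p.2, p.1 \ p.2⟩ : Σ _ : Finset V, Finset V)) ?_ ?_ ?_ ?_ ?_
      · rintro ⟨σ, τ⟩ hp
        rw [Finset.mem_sigma, Finset.mem_filter] at hp
        obtain ⟨hσ, hτ, hsub⟩ := hp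
        rw [mem_cliquesF] at hσ hτ
        have hsub' : (↑τ : Set V) ⊆ linkSet G σ := hsub
        have hdisj : Disjoint σ τ := by
          rw [Finset.disjoint_left]
          intro z hzσ hzτ
          exact G.loopless.irrefl z (hsub' hzτ z hzσ)
        rw [Finset.mem_sigma, mem_cliquesF, Finset.mem_filter, Finset.mem_powerset]
        refine ⟨⟨hσ.1.mono Finset.subset_union_left, isClique_union hσ.2 hτ.2 hsub'⟩,
          Finset.subset_union_left, hσ.1, ?_⟩
        intro he
        have he' : σ = σ ∪ τ := he
        obtain ⟨z, hz⟩ := hτ.1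
        have hz2 : z ∈ σ := by rw [he']; exact Finset.mem_union_right σ hz
        exact (Finset.disjoint_left.mp hdisj hz2) hz
      · rintro ⟨ρ, σ⟩ hp
        rw [Finset.mem_sigma, Finset.mem_filter, Finset.mem_powerset] at hp
        obtain ⟨hρ, hσsub, hσne, hσneρ⟩ := hp
        rw [mem_cliquesF] at hρ
        rw [Finset.mem_sigma, Finset.mem_filter, mem_cliquesF, mem_cliquesF]
        refine ⟨⟨hσne, hρ.2.subset (by exact_mod_cast hσsub)⟩,
          ⟨⟨?_, hρ.2.subset (by simp [Finset.coe_sdiff, Set.diff_subset])⟩, ?_⟩⟩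
        · rw [Finset.sdiff_nonempty]
          intro hc
          exact hσneρ (Finset.Subset.antisymm hσsub hc)
        · intro y hy z hz
          rw [Finset.mem_coe, Finset.mem_sdiff] at hy
          exact hρ.2 (hy.1) (hσsub hz) (by rintro rfl; exact hy.2 hz)
      · rintro ⟨σ, τ⟩ hp
        rw [Finset.mem_sigma, Finset.mem_filter] at hp
        obtain ⟨hσ, hτ, hsub⟩ := hp
        rw [mem_cliquesF] at hσ hτ
        have hsub' : (↑τ : Set V) ⊆ linkSet G σ := hsub
        have hdisj : Disjoint σ τ := by
          rw [Finset.disjoint_left]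
          intro z hzσ hzτ
          exact G.loopless.irrefl z (hsub' hzτ z hzσ)
        show (⟨σ, (σ ∪ τ) \ σ⟩ : Σ _ : Finset V, Finset V) = ⟨σ, τ⟩
        rw [Finset.union_sdiff_cancel_left hdisj]
      · rintro ⟨ρ, σ⟩ hp
        rw [Finset.mem_sigma, Finset.mem_filter, Finset.mem_powerset] at hp
        show (⟨σ ∪ (ρ \ σ), σ⟩ : Σ _ : Finset V, Finset V) = ⟨ρ, σ⟩
        rw [Finset.union_sdiff_of_subset hp.2.1]
      · rintro ⟨σ, τ⟩ hp
        rw [Finset.mem_sigma, Finset.mem_filter] at hp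
        obtain ⟨hσ, hτ, hsub⟩ := hp
        rw [mem_cliquesF] at hσ hτ
        have hsub' : (↑τ : Set V) ⊆ linkSet G σ := hsub
        have hdisj : Disjoint σ τ := by
          rw [Finset.disjoint_left]
          intro z hzσ hzτ
          exact G.loopless.irrefl z (hsub' hzτ z hzσ)
        have hcard : (σ ∪ τ).card = σ.card + τ.card := Finset.card_union_of_disjoint hdisj
        show u σ.card * (-1 : ℚ) ^ (τ.card + 1)
          = u σ.card * (-1 : ℚ) ^ (((σ ∪ τ).card - σ.card) + 1)
        rw [hcard]
        congr 2
        omega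
    rw [hstep]
    refine Finset.sum_congr rfl fun ρ hρ => ?_
    rw [mem_cliquesF] at hρ
    set m := ρ.card with hm
    have hm1 : 1 ≤ m := Finset.card_pos.mpr hρ.1
    -- inner sum over proper nonempty subsets
    have hfull : ∑ σ ∈ ρ.powerset, u σ.card * (-1 : ℚ) ^ ((m - σ.card) + 1)
        = (-1 : ℚ)^m * (2 - u m) := by
      rw [Finset.sum_powerset_apply_card (fun c => u c * (-1 : ℚ) ^ ((m - c) + 1))]
      have hterm : ∀ c ∈ Finset.range (m + 1),
          (m.choose c) • (u c * (-1 : ℚ) ^ ((m - c) + 1))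
            = (-1 : ℚ)^m * ((m.choose c : ℚ) * u c) := by
        intro c hc
        have hcm : c ≤ m := by have := Finset.mem_range.mp hc; omega
        rw [nsmul_eq_mul, pow_succ, neg_one_pow_sub ℚ hcm]
        have := u_mul_neg_pow c
        calc (m.choose c : ℚ) * (u c * ((-1 : ℚ)^m * (-1)^c * (-1)))
            = -((-1 : ℚ)^m) * ((m.choose c : ℚ) * (u c * (-1)^c)) := by ring
          _ = -((-1 : ℚ)^m) * ((m.choose c : ℚ) * (- u c)) := by rw [this]
          _ = (-1 : ℚ)^m * ((m.choose c : ℚ) * u c) := by ring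
      rw [Finset.sum_congr rfl hterm, ← Finset.mul_sum]
      congr 1
      have := u_rec m hm1
      linarith [this]
    have hcompl : ρ.powerset.filter (fun σ => ¬ (σ.Nonempty ∧ σ ≠ ρ)) = {∅, ρ} := by
      ext σ
      rw [Finset.mem_filter, Finset.mem_powerset, Finset.mem_insert, Finset.mem_singleton]
      constructor
      · rintro ⟨hsub, hn⟩
        push_neg at hn
        rcases Finset.eq_empty_or_nonempty σ with rfl | hne
        · exact Or.inl rfl
        · exact Or.inr (hn hne)
      · rintro (rfl | h2)
        · exact ⟨Finset.empty_subset ρ, by simp⟩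
        · rw [h2]
          exact ⟨Finset.Subset.refl ρ, by simp⟩
    have hsplit := Finset.sum_filter_add_sum_filter_not ρ.powerset
      (fun σ => σ.Nonempty ∧ σ ≠ ρ) (fun σ => u σ.card * (-1 : ℚ) ^ ((m - σ.card) + 1))
    have hrest : ∑ σ ∈ ρ.powerset.filter (fun σ => ¬ (σ.Nonempty ∧ σ ≠ ρ)),
        u σ.card * (-1 : ℚ) ^ ((m - σ.card) + 1) = - u m := by
      have hne0 : (∅ : Finset V) ≠ ρ := fun h => hρ.1.ne_empty h.symm
      rw [hcompl, Finset.sum_pair hne0]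
      rw [Finset.card_empty, u_zero, ← hm, Nat.sub_self]
      norm_num
    have hval : ∑ σ ∈ ρ.powerset.filter (fun σ => σ.Nonempty ∧ σ ≠ ρ),
        u σ.card * (-1 : ℚ) ^ ((m - σ.card) + 1)
          = (-1 : ℚ)^m * (2 - u m) + u m := by
      have := hsplit
      rw [hrest, hfull] at this
      linarith [this]
    rw [hval]
    have := u_mul_neg_pow m
    have hswap : (-1 : ℚ)^m * u m = - u m := by
      rw [mul_comm]; exact this
    calc (-1 : ℚ)^m * (2 - u m) + u m
        = 2 * (-1 : ℚ)^m - ((-1 : ℚ)^m * u m) + u m := by ring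
      _ = 2 * (-1 : ℚ)^m - (- u m) + u m := by rw [hswap]
      _ = 2 * (-1 : ℚ)^m + 2 * u m := by ring
  -- conclude
  have hzero : ∑ ρ ∈ cliquesF G, (-1 : ℚ)^ρ.card = 0 := by
    have h := way1.symm.trans way2
    have h2 : ∑ ρ ∈ cliquesF G, (2 * (-1 : ℚ)^ρ.card + 2 * u ρ.card)
        = ∑ ρ ∈ cliquesF G, 2 * (-1 : ℚ)^ρ.card + ∑ ρ ∈ cliquesF G, 2 * u ρ.card :=
      Finset.sum_add_distrib
    rw [h2] at h
    have h3 : ∑ ρ ∈ cliquesF G, 2 * (-1 : ℚ)^ρ.card = 0 := by linarith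
    rw [← Finset.mul_sum] at h3
    linarith
  have hfin : ((eulerChar G : ℤ) : ℚ) = 0 := by
    rw [eulerChar_eq_sum]
    push_cast
    have : ∀ ρ ∈ cliquesF G, (-1 : ℚ)^(ρ.card + 1) = - ((-1 : ℚ)^ρ.card) := by
      intro ρ _
      rw [pow_succ]; ring
    rw [Finset.sum_congr rfl this, Finset.sum_neg_distrib, hzero, neg_zero]
  exact_mod_cast hfin

end EAux

/-- Every odd-dimensional `d`-graph has Euler characteristic zero. -/
theorem stmt9 {V : Type u} [Fintype V] (G : SimpleGraph V) (d : ℕ)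
    (hd : Odd d) (hG : IsDGraph d G) : eulerChar G = 0 :=
  EAux.main G d hd hG
end

section
/- Let G be a d-graph with d odd. Then the combinatorial curvature K(x) = 1 - S_0(x)/2 + S_1(x)/3 - S_2(x)/4 + ... vanishes at every vertex x, where S_k(x) is the number of (k+1)-cliques in the unit sphere S(x). -/
universe u

open scoped Classical

/-!
Write `f_G(t) = ∑ₖ cₖ(G) tᵏ` for the clique polynomial of a finite graph, `cₖ` counting
`k`-cliques (so `c₀ = 1`). Splitting the cliques at a vertex `x` gives
`f_G = f_{G-x} + t f_{S(x)}`, and counting each `(k+1)`-clique once from each of its vertices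
gives `f_G' = ∑ₓ f_{S(x)}`. The first identity shows that `f_G(-1) = 0` for contractible `G` and
`f_G(-1) = (-1)^m` when `G` is an `(m-1)`-sphere (`SphereFuel n m G`). With the second,
induction on the dimension gives the Dehn–Sommerville symmetry `f_G(-1-t) = (-1)^m f_G(t)` of a
sphere: both sides have the same derivative and agree at `t = -1`. The curvature is
`K(x) = ∫_{-1}^0 f_{S(x)}(t) dt`, and for odd `d` the polynomial `f_{S(x)}` is odd about
`t = -1/2`, so the integral vanishes.
-/

open Finset Polynomial

theorem Polynomial.eq_of_derivative_eq_of_eval_eq {R : Type*} [CommRing R] [IsAddTorsionFree R]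
    {p q : R[X]} (hd : derivative p = derivative q) {a : R} (ha : p.eval a = q.eval a) :
    p = q := by
  have hC := eq_C_of_derivative_eq_zero (p := p - q) (by rw [derivative_sub, hd, sub_self])
  have hcoeff : (p - q).coeff 0 = 0 := by
    simpa [ha] using (congrArg (eval a) hC).symm
  rw [hcoeff, map_zero, sub_eq_zero] at hC
  exact hC

theorem Polynomial.integral_eval_eq_zero_of_comp_neg_one_sub {p : ℝ[X]}
    (hp : p.comp (-1 - X) = -p) :
    ∫ t in (-1 : ℝ)..0, p.eval t = 0 := by
  have hsymm (t : ℝ) : p.eval (-1 - t) = -p.eval t := by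
    simpa using congrArg (eval t) hp
  have h := intervalIntegral.integral_comp_sub_left (fun t => p.eval t) (a := -1) (b := 0) (-1)
  simp only [hsymm, intervalIntegral.integral_neg] at h
  norm_num at h
  linarith

namespace SimpleGraph

variable {V : Type*} (G : SimpleGraph V)

noncomputable def cliqueCount (k : ℕ) : ℕ := (G.cliqueSet k).ncard

@[simp]
theorem cliqueCount_zero : G.cliqueCount 0 = 1 := by
  simp [cliqueCount, cliqueSet_zero]

theorem cliqueCount_eq_zero_of_card_lt [Fintype V] {k : ℕ} (hk : Fintype.card V < k) :
    G.cliqueCount k = 0 := by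
  simp [cliqueCount, cliqueSet_eq_empty_iff.mpr (G.cliqueFree_of_card_lt hk)]

theorem cliqueCount_induce (s : Set V) (k : ℕ) :
    (G.induce s).cliqueCount k = {t ∈ G.cliqueSet k | (t : Set V) ⊆ s}.ncard := by
  rw [cliqueCount, ← Set.ncard_image_of_injective ((G.induce s).cliqueSet k)
    (Finset.map_injective (.subtype (· ∈ s)))]
  congr 1
  ext t
  simp only [Set.mem_image, mem_cliqueSet_iff, isNClique_induce_iff, Set.mem_ofPred_eq]
  constructor
  · rintro ⟨t, ht, rfl⟩
    exact ⟨ht, by simp +contextual [Set.subset_def]⟩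
  · rintro ⟨ht, hts⟩
    exact ⟨t.subtype (· ∈ s), by rwa [subtype_map_of_mem hts], subtype_map_of_mem hts⟩

theorem cliqueCount_induce_ne (x : V) (k : ℕ) :
    (G.induce {y | y ≠ x}).cliqueCount k = {t ∈ G.cliqueSet k | x ∉ t}.ncard := by
  rw [cliqueCount_induce]
  congr 1
  ext t
  simp [Set.subset_def]

theorem image_insert_cliqueSet_neighborSet [DecidableEq V] (x : V) (k : ℕ) :
    insert x '' {t ∈ G.cliqueSet k | (t : Set V) ⊆ G.neighborSet x} =
      {t ∈ G.cliqueSet (k + 1) | x ∈ t} := by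
  ext t
  simp only [Set.mem_image, Set.mem_ofPred_eq, mem_cliqueSet_iff]
  constructor
  · rintro ⟨t, ⟨ht, htx⟩, rfl⟩
    exact ⟨ht.insert fun y hy => htx hy, mem_insert_self x t⟩
  · rintro ⟨ht, hx⟩
    refine ⟨t.erase x, ⟨ht.erase_of_mem hx, fun y hy => ?_⟩, insert_erase hx⟩
    rw [coe_erase, Set.mem_sdiff, mem_coe] at hy
    exact ht.isClique hx hy.1 (Ne.symm hy.2)

theorem cliqueCount_induce_neighborSet (x : V) (k : ℕ) :
    (G.induce (G.neighborSet x)).cliqueCount k = {t ∈ G.cliqueSet (k + 1) | x ∈ t}.ncard := by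
  rw [cliqueCount_induce, ← image_insert_cliqueSet_neighborSet, Set.InjOn.ncard_image]
  intro t ht u hu htu
  have hxt : x ∉ t := fun h => G.irrefl (ht.2 h)
  have hxu : x ∉ u := fun h => G.irrefl (hu.2 h)
  rw [← erase_insert hxt, ← erase_insert hxu]
  exact congrArg (·.erase x) htu

theorem cliqueCount_succ [Finite V] (x : V) (k : ℕ) :
    G.cliqueCount (k + 1) = (G.induce {y | y ≠ x}).cliqueCount (k + 1) +
      (G.induce (G.neighborSet x)).cliqueCount k := by
  rw [cliqueCount_induce_ne, cliqueCount_induce_neighborSet, cliqueCount,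
    ← Set.ncard_inter_add_ncard_sdiff_eq_ncard _ {t | x ∈ t}]
  exact add_comm _ _

theorem sum_cliqueCount_induce_neighborSet [Fintype V] (k : ℕ) :
    ∑ x, (G.induce (G.neighborSet x)).cliqueCount k = (k + 1) * G.cliqueCount (k + 1) := by
  have hcount (x : V) : (G.induce (G.neighborSet x)).cliqueCount k =
      #((G.cliqueFinset (k + 1)).bipartiteAbove (· ∈ ·) x) := by
    rw [cliqueCount_induce_neighborSet, ← Set.ncard_coe_finset, coe_bipartiteAbove]
    simp only [mem_cliqueFinset_iff]
    rfl
  simp_rw [hcount, sum_card_bipartiteAbove_eq_sum_card_bipartiteBelow]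
  rw [cliqueCount, ← coe_cliqueFinset, Set.ncard_coe_finset, mul_comm, ← smul_eq_mul,
    ← sum_const]
  refine sum_congr rfl fun t ht => ?_
  simp [bipartiteBelow, (mem_cliqueFinset_iff.mp ht).card_eq]

variable [Fintype V]

noncomputable def cliquePolynomial : ℝ[X] :=
  ∑ k ∈ range (Fintype.card V + 1), C (G.cliqueCount k : ℝ) * X ^ k

@[simp]
theorem coeff_cliquePolynomial (k : ℕ) : G.cliquePolynomial.coeff k = G.cliqueCount k := by
  simp only [cliquePolynomial, finsetSum_coeff, coeff_C_mul_X_pow, sum_ite_eq, mem_range]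
  split_ifs with hk
  · rfl
  · rw [G.cliqueCount_eq_zero_of_card_lt (by omega), Nat.cast_zero]

theorem cliquePolynomial_of_isEmpty [IsEmpty V] : G.cliquePolynomial = 1 := by
  ext (_ | k)
  · simp
  · simp [G.cliqueCount_eq_zero_of_card_lt (k := k + 1) (by simp), coeff_one]

theorem cliquePolynomial_eq_add_X_mul (x : V) :
    G.cliquePolynomial = (G.induce {y | y ≠ x}).cliquePolynomial +
      X * (G.induce (G.neighborSet x)).cliquePolynomial := by
  ext (_ | k)
  · simp
  · simp [coeff_X_mul, G.cliqueCount_succ x k]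

theorem derivative_cliquePolynomial :
    derivative G.cliquePolynomial = ∑ x, (G.induce (G.neighborSet x)).cliquePolynomial := by
  ext k
  have h := congrArg (Nat.cast : ℕ → ℝ) (G.sum_cliqueCount_induce_neighborSet k)
  push_cast at h
  simp [coeff_derivative, h, mul_comm]

theorem integral_eval_cliquePolynomial {N : ℕ} (hN : ∀ k, N < k → G.cliqueCount k = 0) :
    ∫ t in (-1 : ℝ)..0, G.cliquePolynomial.eval t =
      1 + ∑ k ∈ range N, (-1 : ℝ) ^ (k + 1) * (G.cliqueCount (k + 1) / (k + 2)) := by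
  have hdeg : G.cliquePolynomial.natDegree < N + 1 :=
    Nat.lt_succ_of_le <| natDegree_le_iff_coeff_eq_zero.mpr fun k hk => by
      simp [hN k (by exact_mod_cast hk)]
  simp_rw [eval_eq_sum_range' hdeg]
  have hpow (k : ℕ) : ∫ t in (-1 : ℝ)..0, t ^ k = (-1) ^ k / (k + 1) := by
    rw [integral_pow, zero_pow k.succ_ne_zero, pow_succ]
    ring
  rw [intervalIntegral.integral_finsetSum fun k _ =>
    (by fun_prop : Continuous _).intervalIntegrable _ _]
  simp only [intervalIntegral.integral_const_mul, hpow, sum_range_succ', coeff_cliquePolynomial,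
    cliqueCount_zero]
  push_cast
  rw [add_comm]
  congr 1
  · norm_num
  · refine sum_congr rfl fun k _ => ?_
    ring

end SimpleGraph

open SimpleGraph

section

variable {V : Type u} [Fintype V] {G : SimpleGraph V}

theorem Contractible.eval_neg_one_cliquePolynomial (h : Contractible G) :
    G.cliquePolynomial.eval (-1) = 0 := by
  obtain ⟨n, h⟩ := h
  induction n generalizing V with
  | zero => exact h.elim
  | succ n ih =>
    obtain ⟨⟨x⟩, _⟩ | ⟨x, hS, hG⟩ := h
    · have : IsEmpty {y | y ≠ x} := ⟨fun y => y.2 (Subsingleton.elim _ _)⟩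
      have : IsEmpty (G.neighborSet x) := ⟨fun y => G.ne_of_adj y.2 (Subsingleton.elim _ _)⟩
      simp [G.cliquePolynomial_eq_add_X_mul x, cliquePolynomial_of_isEmpty]
    · simp [G.cliquePolynomial_eq_add_X_mul x, ih hG, ih hS]

namespace SphereFuel

variable {n m : ℕ}

theorem eval_neg_one_cliquePolynomial (h : SphereFuel n m G) :
    G.cliquePolynomial.eval (-1) = (-1) ^ m := by
  induction n generalizing m V with
  | zero => exact h.elim
  | succ n ih =>
    cases m with
    | zero =>
      have : IsEmpty V := h
      simp [cliquePolynomial_of_isEmpty]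
    | succ m =>
      obtain ⟨⟨x⟩, hS, hC⟩ := h
      simp [G.cliquePolynomial_eq_add_X_mul x, (hC x).eval_neg_one_cliquePolynomial, ih (hS x),
        pow_succ]

theorem cliqueCount_eq_zero (h : SphereFuel n m G) {k : ℕ} (hk : m < k) :
    G.cliqueCount k = 0 := by
  induction n generalizing m k V with
  | zero => exact h.elim
  | succ n ih =>
    cases m with
    | zero =>
      have : IsEmpty V := h
      exact G.cliqueCount_eq_zero_of_card_lt (by simpa using hk)
    | succ m =>
      obtain ⟨k, rfl⟩ : ∃ j, k = j + 1 := ⟨k - 1, by omega⟩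
      have hsum := G.sum_cliqueCount_induce_neighborSet k
      rw [sum_eq_zero fun x _ => ih (h.2.1 x) (by omega)] at hsum
      simpa using hsum.symm

theorem cliquePolynomial_comp_neg_one_sub (h : SphereFuel n m G) :
    G.cliquePolynomial.comp (-1 - X) = (-1) ^ m * G.cliquePolynomial := by
  induction n generalizing m V with
  | zero => exact h.elim
  | succ n ih =>
    cases m with
    | zero =>
      have : IsEmpty V := h
      simp [cliquePolynomial_of_isEmpty]
    | succ m =>
      refine eq_of_derivative_eq_of_eval_eq (a := -1) ?_ ?_
      · simp [derivative_comp, derivative_cliquePolynomial, ih (h.2.1 _), mul_sum, pow_succ]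
      · simp [eval_comp, h.eval_neg_one_cliquePolynomial, ← coeff_zero_eq_eval_zero, ← mul_pow]

end SphereFuel

end

/-- For `G` a `d`-graph with `d` odd, the combinatorial curvature
`K(x) = 1 - S_0(x)/2 + S_1(x)/3 - S_2(x)/4 + ⋯` vanishes at every vertex `x`,
where `S_k(x)` is the number of `(k+1)`-cliques in the unit sphere `S(x)`. -/
theorem stmt10 {V : Type u} [Fintype V] (G : SimpleGraph V) (d : ℕ)
    (hd : Odd d) (hG : IsDGraph d G) :
    ∀ x : V,
      1 + ∑ k ∈ Finset.range d, (-1 : ℚ) ^ (k + 1) *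
        (({s : Finset {y : V // G.Adj x y} |
            (G.induce (G.neighborSet x)).IsNClique (k + 1) s}.ncard : ℚ) / (k + 2))
      = 0 := by
  intro x
  obtain ⟨-, n, hS⟩ := hG x
  rw [show ((d : ℤ) - 1 + 1).toNat = d by omega] at hS
  have hK := (G.induce (G.neighborSet x)).integral_eval_cliquePolynomial
    fun _ => hS.cliqueCount_eq_zero
  rw [integral_eval_eq_zero_of_comp_neg_one_sub
    (by rw [hS.cliquePolynomial_comp_neg_one_sub, hd.neg_one_pow, neg_one_mul])] at hK
  change 1 + ∑ k ∈ range d, (-1 : ℚ) ^ (k + 1) *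
    (((G.induce (G.neighborSet x)).cliqueCount (k + 1) : ℚ) / (k + 2)) = 0
  rw [← Rat.cast_inj (α := ℝ)]
  push_cast
  exact hK.symm
end
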